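/- arXiv:2005.00616 — 9 statements merged into one kernel-verified Lean document; each statement's English description precedes it below -/
import Mathlib

section
/- Let L = L_θθ + L_θη·L_ηθ/μ. Then for all θ₁, θ₂ ∈ F, the robust loss satisfies R(θ₁) ≤ R(θ₂) + ⟨∇_θ A(η*(θ₂), θ₂), θ₁ − θ₂⟩ + (L/2)·‖θ₁ − θ₂‖². -/
open scoped RealInnerProductSpace

private lemma grad_sub_norm' {F : Type*} [NormedAddCommGroup F] [InnerProductSpace ℝ F]
    [CompleteSpace F] (f g : F → ℝ) (x y : F) :
    ‖gradient f x - gradient g y‖ = ‖fderiv ℝ f x - fderiv ℝ g y‖ := by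
  rw [gradient, gradient, ← map_sub, LinearIsometryEquiv.norm_map]

private lemma inner_gradient' {F : Type*} [NormedAddCommGroup F] [InnerProductSpace ℝ F]
    [CompleteSpace F] (f : F → ℝ) (x v : F) :
    ⟪gradient f x, v⟫ = fderiv ℝ f x v := by
  rw [gradient]; exact InnerProductSpace.toDual_symm_apply

private lemma taylor_upper' {F : Type*} [NormedAddCommGroup F] [InnerProductSpace ℝ F]
    (f : F → ℝ) (hf : Differentiable ℝ f) (x y : F) (C : ℝ)
    (hC : ∀ z ∈ segment ℝ x y, ‖fderiv ℝ f z - fderiv ℝ f x‖ ≤ C) :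
    f y ≤ f x + fderiv ℝ f x (y - x) + C * ‖y - x‖ := by
  set D := fderiv ℝ f x
  set h := fun z => f z - D z with hh
  have hdh : ∀ z, fderiv ℝ h z = fderiv ℝ f z - D := by
    intro z
    rw [hh, fderiv_fun_sub (hf z) (D.differentiableAt)]
    simp
  have hdiff : Differentiable ℝ h := fun z => ((hf z).sub (D.differentiableAt))
  have key : ‖h y - h x‖ ≤ C * ‖y - x‖ := by
    apply (convex_segment x y).norm_image_sub_le_of_norm_fderiv_le
      (fun z _ => hdiff z) (fun z hz => by rw [hdh]; exact hC z hz)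
      (left_mem_segment ℝ x y) (right_mem_segment ℝ x y)
  have h1 : h y - h x ≤ C * ‖y - x‖ := (le_abs_self _).trans key
  simp only [hh] at h1
  have h2 := sub_le_iff_le_add.mp h1
  calc f y ≤ D y + (f x - D x + C * ‖y - x‖) := by linarith
    _ = f x + D (y - x) + C * ‖y - x‖ := by rw [map_sub]; ring

set_option maxHeartbeats 2000000 in
/-- smoothness of the robust loss (Proposition 1, from Sinha et al.):
with `L = Lθθ + Lθη * Lηθ / μ`, for all `θ₁ θ₂`,
`R θ₁ ≤ R θ₂ + ⟪∇_θ A (η*(θ₂), θ₂), θ₁ - θ₂⟫ + (L/2) * ‖θ₁ - θ₂‖²`. -/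
theorem robust_loss_smooth
    {E F : Type*} [NormedAddCommGroup E] [InnerProductSpace ℝ E] [FiniteDimensional ℝ E]
    [NormedAddCommGroup F] [InnerProductSpace ℝ F] [FiniteDimensional ℝ F]
    (𝒳 : Set E) (h𝒳ne : 𝒳.Nonempty) (h𝒳cp : IsCompact 𝒳) (h𝒳cv : Convex ℝ 𝒳)
    (A : E → F → ℝ)
    (hA : Differentiable ℝ (fun q : E × F => A q.1 q.2))
    (μ Lθθ Lθη Lηθ : ℝ) (hμ : 0 < μ)
    (hLθθ : 0 ≤ Lθθ) (hLθη : 0 ≤ Lθη) (hLηθ : 0 ≤ Lηθ)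
    -- (i) μ-strong concavity of `A (·, θ)` on 𝒳
    (hconc : ∀ θ : F, ∀ η₁ ∈ 𝒳, ∀ η₂ ∈ 𝒳,
      A η₁ θ ≤ A η₂ θ + ⟪gradient (fun η => A η θ) η₂, η₁ - η₂⟫
        - μ / 2 * ‖η₁ - η₂‖ ^ 2)
    -- (ii) Lipschitz conditions on the partial gradients
    (hθθ : ∀ η ∈ 𝒳, ∀ θ₁ θ₂ : F,
      ‖gradient (A η) θ₁ - gradient (A η) θ₂‖ ≤ Lθθ * ‖θ₁ - θ₂‖)
    (hθη : ∀ η₁ ∈ 𝒳, ∀ η₂ ∈ 𝒳, ∀ θ : F,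
      ‖gradient (A η₁) θ - gradient (A η₂) θ‖ ≤ Lθη * ‖η₁ - η₂‖)
    (hηθ : ∀ η ∈ 𝒳, ∀ θ₁ θ₂ : F,
      ‖gradient (fun η' => A η' θ₁) η - gradient (fun η' => A η' θ₂) η‖ ≤ Lηθ * ‖θ₁ - θ₂‖)
    -- η*(θ): the unique maximizer of `A (·, θ)` over 𝒳
    (ηstar : F → E)
    (hmem : ∀ θ, ηstar θ ∈ 𝒳)
    (hmax : ∀ θ, ∀ η ∈ 𝒳, A η θ ≤ A (ηstar θ) θ)
    (huniq : ∀ θ, ∀ η ∈ 𝒳, (∀ η' ∈ 𝒳, A η' θ ≤ A η θ) → η = ηstar θ)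
    -- the robust loss
    (R : F → ℝ) (hR : ∀ θ, R θ = A (ηstar θ) θ) :
    ∀ θ₁ θ₂ : F,
      R θ₁ ≤ R θ₂ + ⟪gradient (A (ηstar θ₂)) θ₂, θ₁ - θ₂⟫
        + (Lθθ + Lθη * Lηθ / μ) / 2 * ‖θ₁ - θ₂‖ ^ 2 := by
  have hc0 : 0 ≤ Lθη * Lηθ / μ := div_nonneg (mul_nonneg hLθη hLηθ) hμ.le
  set c := Lθη * Lηθ / μ with hc
  set L := Lθθ + c with hLdef
  have hL0 : 0 ≤ L := by positivity
  -- differentiability of partial maps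
  have hAη : ∀ θ : F, Differentiable ℝ (fun η => A η θ) := fun θ =>
    hA.comp (differentiable_id.prodMk (differentiable_const θ))
  have hAθ : ∀ η : E, Differentiable ℝ (A η) := fun η =>
    hA.comp ((differentiable_const η).prodMk differentiable_id)
  -- quadratic growth
  have qg : ∀ θ : F, ∀ η ∈ 𝒳, A η θ + μ / 2 * ‖η - ηstar θ‖ ^ 2 ≤ A (ηstar θ) θ := by
    intro θ η hη
    set s := ηstar θ with hsdef
    have hs : s ∈ 𝒳 := hmem θ
    set D := ‖η - s‖ ^ 2 with hD
    have hD0 : 0 ≤ D := by positivity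
    have key : ∀ t : ℝ, 0 < t → t ≤ 1 → A η θ + μ / 2 * D ≤ A s θ + μ / 2 * D * t := by
      intro t ht0 ht1
      set m := (1 - t) • s + t • η with hm
      have hmX : m ∈ 𝒳 := h𝒳cv hs hη (by linarith) ht0.le (by ring)
      have h1 := hconc θ η hη m hmX
      have h2 := hconc θ s hs m hmX
      have e1 : η - m = (1 - t) • (η - s) := by rw [hm]; module
      have e2 : s - m = (-t) • (η - s) := by rw [hm]; module
      have n1 : ‖(1 - t) • (η - s)‖ ^ 2 = (1 - t) ^ 2 * D := by
        rw [norm_smul, Real.norm_eq_abs, abs_of_nonneg (by linarith : (0:ℝ) ≤ 1 - t),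
          mul_pow, hD]
      have n2 : ‖(-t) • (η - s)‖ ^ 2 = t ^ 2 * D := by
        rw [norm_smul, Real.norm_eq_abs, abs_neg, abs_of_nonneg ht0.le, mul_pow, hD]
      rw [e1, real_inner_smul_right, n1] at h1
      rw [e2, real_inner_smul_right, n2] at h2
      have hmax' := hmax θ m hmX
      rw [← hsdef] at hmax'
      have hcomb : t * (A η θ + μ / 2 * D) ≤ t * (A s θ + μ / 2 * D * t) := by
        nlinarith [mul_le_mul_of_nonneg_left h1 ht0.le,
          mul_le_mul_of_nonneg_left h2 (by linarith : (0:ℝ) ≤ 1 - t)]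
      exact le_of_mul_le_mul_left hcomb ht0
    apply le_of_forall_pos_le_add
    intro ε hε
    set B := μ / 2 * D with hB
    have hB0 : 0 ≤ B := by positivity
    set t := min 1 (ε / (B + 1)) with ht
    have ht0 : 0 < t := lt_min one_pos (by positivity)
    have ht1 : t ≤ 1 := min_le_left _ _
    have ht2 : t * (B + 1) ≤ ε := by
      rw [← le_div_iff₀ (by positivity : (0:ℝ) < B + 1)]
      exact min_le_right _ _
    have hBt : B * t ≤ ε := by nlinarith
    have := key t ht0 ht1
    linarith
  -- Lipschitz continuity of ηstar
  have lip : ∀ θa θb : F, ‖ηstar θa - ηstar θb‖ ≤ Lηθ / μ * ‖θa - θb‖ := by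
    intro θa θb
    set ea := ηstar θa with hea
    set eb := ηstar θb with heb
    have q1 := qg θa eb (hmem θb)
    have q2 := qg θb ea (hmem θa)
    rw [← hea] at q1; rw [← heb] at q2
    have hnsym : ‖eb - ea‖ = ‖ea - eb‖ := norm_sub_rev _ _
    set g := fun η => A η θa - A η θb with hg
    have hgd : Differentiable ℝ g := (hAη θa).sub (hAη θb)
    have hbd : ∀ z ∈ 𝒳, ‖fderiv ℝ g z‖ ≤ Lηθ * ‖θa - θb‖ := by
      intro z hz
      have hfd : fderiv ℝ g z = fderiv ℝ (fun η => A η θa) z - fderiv ℝ (fun η => A η θb) z :=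
        fderiv_sub (hAη θa z) (hAη θb z)
      rw [hfd, ← grad_sub_norm']
      exact hηθ z hz θa θb
    have mvt : ‖g ea - g eb‖ ≤ Lηθ * ‖θa - θb‖ * ‖ea - eb‖ :=
      h𝒳cv.norm_image_sub_le_of_norm_fderiv_le (fun z _ => hgd z) hbd (hmem θb) (hmem θa)
    have hge : g ea - g eb ≤ Lηθ * ‖θa - θb‖ * ‖ea - eb‖ := (le_abs_self _).trans mvt
    simp only [hg] at hge
    have hmain : μ * ‖ea - eb‖ ^ 2 ≤ Lηθ * ‖θa - θb‖ * ‖ea - eb‖ := by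
      rw [hnsym] at q1
      nlinarith [q1, q2, hge]
    rcases eq_or_lt_of_le (norm_nonneg (ea - eb)) with h0 | h0
    · rw [← h0]; positivity
    · rw [div_mul_eq_mul_div, le_div_iff₀ hμ]
      nlinarith [hmain, h0]
  -- Lipschitz continuity of the (Danskin) gradient candidate
  have gl : ∀ θa θb : F,
      ‖gradient (A (ηstar θa)) θa - gradient (A (ηstar θb)) θb‖ ≤ L * ‖θa - θb‖ := by
    intro θa θb
    have t1 : ‖gradient (A (ηstar θa)) θa - gradient (A (ηstar θa)) θb‖ ≤ Lθθ * ‖θa - θb‖ :=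
      hθθ (ηstar θa) (hmem θa) θa θb
    have t2 : ‖gradient (A (ηstar θa)) θb - gradient (A (ηstar θb)) θb‖
        ≤ Lθη * ‖ηstar θa - ηstar θb‖ := hθη (ηstar θa) (hmem θa) (ηstar θb) (hmem θb) θb
    have t3 : Lθη * ‖ηstar θa - ηstar θb‖ ≤ Lθη * (Lηθ / μ * ‖θa - θb‖) :=
      mul_le_mul_of_nonneg_left (lip θa θb) hLθη
    have tri := norm_sub_le_norm_sub_add_norm_sub (gradient (A (ηstar θa)) θa)
      (gradient (A (ηstar θa)) θb) (gradient (A (ηstar θb)) θb)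
    have hcc : Lθη * (Lηθ / μ * ‖θa - θb‖) = c * ‖θa - θb‖ := by rw [hc]; ring
    rw [hcc] at t3
    rw [hLdef]
    linarith
  -- one-step descent bound
  have step : ∀ θa θb : F, R θb ≤ R θa + ⟪gradient (A (ηstar θa)) θa, θb - θa⟫
      + (Lθθ + c) * ‖θb - θa‖ ^ 2 := by
    intro θa θb
    have hCb : ∀ z ∈ segment ℝ θa θb,
        ‖fderiv ℝ (A (ηstar θb)) z - fderiv ℝ (A (ηstar θb)) θa‖ ≤ Lθθ * ‖θb - θa‖ := by
      intro z hz
      rw [← grad_sub_norm']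
      obtain ⟨a, b, ha, hb, hab, rfl⟩ := hz
      have hzsub : a • θa + b • θb - θa = b • (θb - θa) := by
        have haa : a = 1 - b := by linarith
        rw [haa]; module
      calc ‖gradient (A (ηstar θb)) (a • θa + b • θb) - gradient (A (ηstar θb)) θa‖
          ≤ Lθθ * ‖a • θa + b • θb - θa‖ := hθθ (ηstar θb) (hmem θb) _ _
        _ ≤ Lθθ * ‖θb - θa‖ := by
            rw [hzsub, norm_smul, Real.norm_eq_abs, abs_of_nonneg hb]
            nlinarith [mul_nonneg (mul_nonneg hLθθ (norm_nonneg (θb - θa)))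
              (by linarith : (0:ℝ) ≤ 1 - b)]
    have tb := taylor_upper' (A (ηstar θb)) (hAθ _) θa θb (Lθθ * ‖θb - θa‖) hCb
    rw [← inner_gradient'] at tb
    have hAm : A (ηstar θb) θa ≤ A (ηstar θa) θa := hmax θa _ (hmem θb)
    have hinn : ⟪gradient (A (ηstar θb)) θa, θb - θa⟫
        ≤ ⟪gradient (A (ηstar θa)) θa, θb - θa⟫ + c * ‖θb - θa‖ ^ 2 := by
      have hsplit : ⟪gradient (A (ηstar θb)) θa, θb - θa⟫
          - ⟪gradient (A (ηstar θa)) θa, θb - θa⟫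
          = ⟪gradient (A (ηstar θb)) θa - gradient (A (ηstar θa)) θa, θb - θa⟫ := by
        rw [inner_sub_left]
      have h1 : ⟪gradient (A (ηstar θb)) θa - gradient (A (ηstar θa)) θa, θb - θa⟫
          ≤ ‖gradient (A (ηstar θb)) θa - gradient (A (ηstar θa)) θa‖ * ‖θb - θa‖ :=
        real_inner_le_norm _ _
      have h2 : ‖gradient (A (ηstar θb)) θa - gradient (A (ηstar θa)) θa‖
          ≤ Lθη * ‖ηstar θb - ηstar θa‖ := hθη (ηstar θb) (hmem θb) (ηstar θa) (hmem θa) θa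
      have h3 : ‖ηstar θb - ηstar θa‖ ≤ Lηθ / μ * ‖θb - θa‖ := lip θb θa
      have h4 : ‖gradient (A (ηstar θb)) θa - gradient (A (ηstar θa)) θa‖ * ‖θb - θa‖
          ≤ Lθη * (Lηθ / μ * ‖θb - θa‖) * ‖θb - θa‖ := by
        apply mul_le_mul_of_nonneg_right _ (norm_nonneg _)
        exact h2.trans (mul_le_mul_of_nonneg_left h3 hLθη)
      have h5 : Lθη * (Lηθ / μ * ‖θb - θa‖) * ‖θb - θa‖ = c * ‖θb - θa‖ ^ 2 := by
        rw [hc]; ring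
      linarith [hsplit ▸ (h1.trans (h4.trans_eq h5))]
    have hsq : Lθθ * ‖θb - θa‖ * ‖θb - θa‖ = Lθθ * ‖θb - θa‖ ^ 2 := by ring
    rw [hR θa, hR θb]
    linarith [tb, hAm, hinn, hsq ▸ le_refl (Lθθ * ‖θb - θa‖ * ‖θb - θa‖)]
  -- main induction
  intro θ₁ θ₂
  apply le_of_forall_pos_le_add
  intro ε hε
  set d := θ₁ - θ₂ with hd
  set P := ⟪gradient (A (ηstar θ₂)) θ₂, d⟫ with hP
  set Q := ‖d‖ ^ 2 with hQ
  have hQ0 : 0 ≤ Q := by positivity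
  obtain ⟨n, hn⟩ := exists_nat_gt ((Lθθ + c) * Q / ε)
  set N : ℕ := n + 1 with hNdef
  have hNpos : (0:ℝ) < (N:ℝ) := by positivity
  have hNne : (N:ℝ) ≠ 0 := hNpos.ne'
  have hnN : ((Lθθ + c) * Q / ε) < (N:ℝ) := by
    calc ((Lθθ + c) * Q / ε) < (n:ℝ) := hn
      _ ≤ (N:ℝ) := by exact_mod_cast Nat.le_succ n
  have hεN : (Lθθ + c) / (N:ℝ) * Q ≤ ε := by
    rw [div_lt_iff₀ hε] at hnN
    rw [div_mul_eq_mul_div, div_le_iff₀ hNpos]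
    nlinarith
  have main : ∀ k : ℕ, k ≤ N →
      R (θ₂ + ((k:ℝ) / N) • d) ≤ R θ₂ + ((k:ℝ) / N) * P
        + (L * ((k:ℝ) * ((k:ℝ) - 1) / 2) + (Lθθ + c) * (k:ℝ)) / (N:ℝ) ^ 2 * Q := by
    intro k hk
    induction k with
    | zero => simp
    | succ k ih =>
      have ih' := ih (Nat.le_of_succ_le hk)
      set θa := θ₂ + ((k:ℝ) / N) • d with hθa
      set θb := θ₂ + (((k:ℝ) + 1) / N) • d with hθb
      have hζ : θ₂ + ((↑(k+1):ℝ) / N) • d = θb := by push_cast [hθb]; ring_nf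
      have hsub : θb - θa = ((1:ℝ) / N) • d := by
        rw [hθa, hθb, add_sub_add_left_eq_sub, ← sub_smul]
        congr 1
        field_simp
        ring
      have hθa2 : θa - θ₂ = ((k:ℝ) / N) • d := by rw [hθa]; abel
      have hna : ‖θa - θ₂‖ = (k:ℝ) / N * ‖d‖ := by
        rw [hθa2, norm_smul, Real.norm_eq_abs, abs_of_nonneg (by positivity)]
      have hstep := step θa θb
      rw [hsub] at hstep
      have hin1 : ⟪gradient (A (ηstar θa)) θa, ((1:ℝ)/N) • d⟫
          = (1/N) * ⟪gradient (A (ηstar θa)) θa, d⟫ := by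
        rw [real_inner_smul_right]
      have hin2 : ⟪gradient (A (ηstar θa)) θa, d⟫ ≤ P + L * ((k:ℝ)/N) * Q := by
        have hs1 : ⟪gradient (A (ηstar θa)) θa, d⟫ - P
            = ⟪gradient (A (ηstar θa)) θa - gradient (A (ηstar θ₂)) θ₂, d⟫ := by
          rw [hP, inner_sub_left]
        have hs2 : ⟪gradient (A (ηstar θa)) θa - gradient (A (ηstar θ₂)) θ₂, d⟫
            ≤ ‖gradient (A (ηstar θa)) θa - gradient (A (ηstar θ₂)) θ₂‖ * ‖d‖ :=
          real_inner_le_norm _ _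
        have hs3 : ‖gradient (A (ηstar θa)) θa - gradient (A (ηstar θ₂)) θ₂‖ * ‖d‖
            ≤ L * ((k:ℝ)/N * ‖d‖) * ‖d‖ := by
          apply mul_le_mul_of_nonneg_right _ (norm_nonneg _)
          have := gl θa θ₂
          rwa [hna] at this
        have hs4 : L * ((k:ℝ)/N * ‖d‖) * ‖d‖ = L * ((k:ℝ)/N) * Q := by rw [hQ]; ring
        linarith [hs1 ▸ (hs2.trans (hs3.trans_eq hs4))]
      have hnb : ‖((1:ℝ)/N) • d‖ ^ 2 = (1/(N:ℝ))^2 * Q := by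
        rw [norm_smul, mul_pow, Real.norm_eq_abs, sq_abs, hQ]
      have hE1 : R θb ≤ R θa + (1/(N:ℝ)) * (P + L * ((k:ℝ)/N) * Q)
          + (Lθθ + c) * ((1/(N:ℝ))^2 * Q) := by
        have h6 : (1/(N:ℝ)) * ⟪gradient (A (ηstar θa)) θa, d⟫
            ≤ (1/(N:ℝ)) * (P + L * ((k:ℝ)/N) * Q) :=
          mul_le_mul_of_nonneg_left hin2 (by positivity)
        rw [hin1, hnb] at hstep
        linarith
      have hco : R θ₂ + ((↑(k+1):ℝ) / N) * P
          + (L * ((↑(k+1):ℝ) * ((↑(k+1):ℝ) - 1) / 2) + (Lθθ + c) * (↑(k+1):ℝ)) / (N:ℝ)^2 * Q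
          = (R θ₂ + ((k:ℝ)/N) * P
              + (L * ((k:ℝ) * ((k:ℝ) - 1) / 2) + (Lθθ + c) * (k:ℝ)) / (N:ℝ)^2 * Q)
            + ((1/(N:ℝ)) * (P + L * ((k:ℝ)/N) * Q) + (Lθθ + c) * ((1/(N:ℝ))^2 * Q)) := by
        push_cast
        field_simp
        ring
      rw [hζ, hco]
      linarith
  have hfin := main N le_rfl
  have hNN : ((N:ℝ) / N) = 1 := div_self hNne
  rw [hNN, one_smul, hd, add_sub_cancel] at hfin
  have hcoef : (L * ((N:ℝ) * ((N:ℝ) - 1) / 2) + (Lθθ + c) * (N:ℝ)) / (N:ℝ)^2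
      = L * (((N:ℝ) - 1)/(N:ℝ)) / 2 + (Lθθ + c) / N := by
    field_simp
  have hfrac : ((N:ℝ) - 1)/(N:ℝ) ≤ 1 := by
    rw [div_le_one hNpos]; linarith
  have hLQ : L * (((N:ℝ) - 1)/(N:ℝ)) / 2 * Q ≤ L / 2 * Q := by
    have := mul_le_mul_of_nonneg_left hfrac (mul_nonneg hL0 hQ0)
    nlinarith
  have hgoal : (L * ((N:ℝ) * ((N:ℝ) - 1) / 2) + (Lθθ + c) * (N:ℝ)) / (N:ℝ)^2 * Q
      ≤ L / 2 * Q + ε := by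
    rw [hcoef, add_mul]
    linarith
  have hfin2 : R θ₁ ≤ R θ₂ + P + (L / 2 * Q + ε) := by
    rw [one_mul] at hfin
    linarith
  rw [hLdef] at hfin2
  linarith [hfin2]
end

section
/- For all θ₁, θ₂ ∈ F, the maximizer map is Lipschitz: ‖η*(θ₁) − η*(θ₂)‖ ≤ (L_ηθ/μ)·‖θ₁ − θ₂‖. -/
open scoped RealInnerProductSpace
open Filter Set Topology

private lemma quad_growth {E : Type*} [NormedAddCommGroup E] [InnerProductSpace ℝ E]
    {𝒳 : Set E} (h𝒳cv : Convex ℝ 𝒳) (f : E → ℝ) (g : E → E) {μ : ℝ}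
    (hconc : ∀ η₁ ∈ 𝒳, ∀ η₂ ∈ 𝒳,
      f η₁ ≤ f η₂ + ⟪g η₂, η₁ - η₂⟫ - μ / 2 * ‖η₁ - η₂‖ ^ 2)
    {m : E} (hm : m ∈ 𝒳) (hmax : ∀ η ∈ 𝒳, f η ≤ f m)
    {η : E} (hη : η ∈ 𝒳) : f η + μ / 2 * ‖η - m‖ ^ 2 ≤ f m := by
  have key : ∀ t : ℝ, 0 < t → t < 1 → f η + μ / 2 * (1 - t) * ‖η - m‖ ^ 2 ≤ f m := by
    intro t ht0 ht1
    set z : E := m + t • (η - m) with hz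
    have hzmem : z ∈ 𝒳 := by
      have := h𝒳cv hm hη (a := 1 - t) (b := t) (by linarith) (le_of_lt ht0) (by ring)
      convert this using 1
      rw [hz]; module
    have h1 := hconc m hm z hzmem
    have h2 := hconc η hη z hzmem
    have hmz : m - z = (-t) • (η - m) := by rw [hz]; module
    have hEz : η - z = (1 - t) • (η - m) := by rw [hz]; module
    have nmz : ‖m - z‖ ^ 2 = t ^ 2 * ‖η - m‖ ^ 2 := by
      rw [hmz, norm_smul]; simp [abs_of_pos ht0]; ring
    have nEz : ‖η - z‖ ^ 2 = (1 - t) ^ 2 * ‖η - m‖ ^ 2 := by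
      rw [hEz, norm_smul]; rw [Real.norm_eq_abs, abs_of_pos (by linarith)]; ring
    have imz : ⟪g z, m - z⟫ = (-t) * ⟪g z, η - m⟫ := by
      rw [hmz, real_inner_smul_right]
    have iEz : ⟪g z, η - z⟫ = (1 - t) * ⟪g z, η - m⟫ := by
      rw [hEz, real_inner_smul_right]
    have hzm : f z ≤ f m := hmax z hzmem
    rw [imz, nmz] at h1
    rw [iEz, nEz] at h2
    nlinarith [sq_nonneg (‖η - m‖), mul_pos ht0 (sub_pos.mpr ht1)]
  have hts : Tendsto (fun t : ℝ => f η + μ / 2 * (1 - t) * ‖η - m‖ ^ 2)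
      (𝓝[>] (0:ℝ)) (𝓝 (f η + μ / 2 * ‖η - m‖ ^ 2)) := by
    have : Continuous (fun t : ℝ => f η + μ / 2 * (1 - t) * ‖η - m‖ ^ 2) := by continuity
    have h := this.tendsto 0
    simp only [sub_zero, mul_one] at h
    exact h.mono_left nhdsWithin_le_nhds
  refine le_of_tendsto hts ?_
  filter_upwards [self_mem_nhdsWithin,
    eventually_nhdsWithin_of_eventually_nhds (eventually_lt_nhds one_pos)] with t ht ht1
  exact key t ht ht1

/-- the maximizer map `η*` is (Lηθ/μ)-Lipschitz:
`‖η*(θ₁) - η*(θ₂)‖ ≤ (Lηθ/μ) * ‖θ₁ - θ₂‖` for all `θ₁ θ₂`. -/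
theorem maximizer_lipschitz
    {E F : Type*} [NormedAddCommGroup E] [InnerProductSpace ℝ E] [FiniteDimensional ℝ E]
    [NormedAddCommGroup F] [InnerProductSpace ℝ F] [FiniteDimensional ℝ F]
    (𝒳 : Set E) (h𝒳ne : 𝒳.Nonempty) (h𝒳cp : IsCompact 𝒳) (h𝒳cv : Convex ℝ 𝒳)
    (A : E → F → ℝ)
    (hA : Differentiable ℝ (fun q : E × F => A q.1 q.2))
    (μ Lηθ : ℝ) (hμ : 0 < μ) (hLηθ : 0 ≤ Lηθ)
    -- (i) μ-strong concavity of `A (·, θ)` on 𝒳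
    (hconc : ∀ θ : F, ∀ η₁ ∈ 𝒳, ∀ η₂ ∈ 𝒳,
      A η₁ θ ≤ A η₂ θ + ⟪gradient (fun η => A η θ) η₂, η₁ - η₂⟫
        - μ / 2 * ‖η₁ - η₂‖ ^ 2)
    -- (ii) Lipschitz condition of `∇_η A` in θ
    (hηθ : ∀ η ∈ 𝒳, ∀ θ₁ θ₂ : F,
      ‖gradient (fun η' => A η' θ₁) η - gradient (fun η' => A η' θ₂) η‖ ≤ Lηθ * ‖θ₁ - θ₂‖)
    -- η*(θ): the unique maximizer of `A (·, θ)` over 𝒳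
    (ηstar : F → E)
    (hmem : ∀ θ, ηstar θ ∈ 𝒳)
    (hmax : ∀ θ, ∀ η ∈ 𝒳, A η θ ≤ A (ηstar θ) θ)
    (huniq : ∀ θ, ∀ η ∈ 𝒳, (∀ η' ∈ 𝒳, A η' θ ≤ A η θ) → η = ηstar θ) :
    ∀ θ₁ θ₂ : F, ‖ηstar θ₁ - ηstar θ₂‖ ≤ Lηθ / μ * ‖θ₁ - θ₂‖ := by
  intro θ₁ θ₂
  set x := ηstar θ₁ with hx
  set y := ηstar θ₂ with hy
  by_cases hxy : x = y
  · rw [hxy, sub_self, norm_zero]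
    positivity
  have hd : 0 < ‖x - y‖ := by
    rw [norm_pos_iff]
    exact sub_ne_zero.mpr hxy
  set v := x - y with hv
  -- differentiability of A(·, θ)
  have hfθ : ∀ θ : F, Differentiable ℝ (fun η => A η θ) := by
    intro θ
    exact hA.comp ((differentiable_id (𝕜 := ℝ)).prodMk (differentiable_const θ))
  -- the curve s ↦ y + s • v
  have hcurve : ∀ t : ℝ, HasDerivAt (fun s : ℝ => y + s • v) v t := by
    intro t
    have := ((hasDerivAt_id t).smul_const v).const_add y
    simpa using this
  have hmemline : ∀ t : ℝ, 0 ≤ t → t ≤ 1 → y + t • v ∈ 𝒳 := by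
    intro t ht0 ht1
    have := h𝒳cv (hmem θ₂) (hmem θ₁) (a := 1 - t) (b := t) (by linarith) ht0 (by ring)
    convert this using 1
    rw [hv]; module
  -- derivative of s ↦ A (y + s • v) θ
  have hφd : ∀ θ : F, ∀ t : ℝ,
      HasDerivAt (fun s : ℝ => A (y + s • v) θ)
        ⟪gradient (fun η => A η θ) (y + t • v), v⟫ t := by
    intro θ t
    have hg : HasFDerivAt (fun η => A η θ)
        ((InnerProductSpace.toDualMap ℝ E) (gradient (fun η => A η θ) (y + t • v)))
        (y + t • v) :=
      hasGradientAt_iff_hasFDerivAt.mp ((hfθ θ (y + t • v)).hasGradientAt)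
    have := hg.comp_hasDerivAt t (hcurve t)
    simpa [InnerProductSpace.toDualMap_apply_apply, Function.comp_def] using this
  -- the function φ
  set φ : ℝ → ℝ := fun s => A (y + s • v) θ₁ - A (y + s • v) θ₂ with hφ
  have hφd' : ∀ t : ℝ, HasDerivAt φ
      ⟪gradient (fun η => A η θ₁) (y + t • v)
        - gradient (fun η => A η θ₂) (y + t • v), v⟫ t := by
    intro t
    have := (hφd θ₁ t).sub (hφd θ₂ t)
    simpa [inner_sub_left, Pi.sub_def] using this
  -- MVT
  obtain ⟨c, hc, hc'⟩ := exists_hasDerivAt_eq_slope φ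
      (fun t => ⟪gradient (fun η => A η θ₁) (y + t • v)
        - gradient (fun η => A η θ₂) (y + t • v), v⟫)
      one_pos
      (fun t _ => (hφd' t).continuousAt.continuousWithinAt)
      (fun t _ => hφd' t)
  -- quadratic growth at both maximizers
  have hg1 : A y θ₁ + μ / 2 * ‖y - x‖ ^ 2 ≤ A x θ₁ :=
    quad_growth h𝒳cv (fun η => A η θ₁) (gradient (fun η => A η θ₁))
      (hconc θ₁) (hmem θ₁) (hmax θ₁) (hmem θ₂)
  have hg2 : A x θ₂ + μ / 2 * ‖x - y‖ ^ 2 ≤ A y θ₂ :=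
    quad_growth h𝒳cv (fun η => A η θ₂) (gradient (fun η => A η θ₂))
      (hconc θ₂) (hmem θ₂) (hmax θ₂) (hmem θ₁)
  have hyx : ‖y - x‖ = ‖x - y‖ := norm_sub_rev y x
  -- endpoint values
  have hφ1 : φ 1 = A x θ₁ - A x θ₂ := by
    have h1 : y + (1 : ℝ) • v = x := by rw [hv]; module
    rw [hφ]; simp only [h1]
  have hφ0 : φ 0 = A y θ₁ - A y θ₂ := by
    have h0 : y + (0 : ℝ) • v = y := by module
    rw [hφ]; simp only [h0]
  have hlower : μ * ‖x - y‖ ^ 2 ≤ φ 1 - φ 0 := by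
    rw [hφ1, hφ0]
    rw [hyx] at hg1
    linarith
  -- upper bound via Cauchy-Schwarz and the Lipschitz hypothesis
  have hzc : y + c • v ∈ 𝒳 := hmemline c hc.1.le hc.2.le
  have hupper : φ 1 - φ 0 ≤ Lηθ * ‖θ₁ - θ₂‖ * ‖x - y‖ := by
    have hslope : φ 1 - φ 0
        = ⟪gradient (fun η => A η θ₁) (y + c • v)
          - gradient (fun η => A η θ₂) (y + c • v), v⟫ := by
      rw [hc']; ring
    rw [hslope]
    calc ⟪gradient (fun η => A η θ₁) (y + c • v)
          - gradient (fun η => A η θ₂) (y + c • v), v⟫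
        ≤ ‖gradient (fun η => A η θ₁) (y + c • v)
          - gradient (fun η => A η θ₂) (y + c • v)‖ * ‖v‖ := real_inner_le_norm _ _
      _ ≤ Lηθ * ‖θ₁ - θ₂‖ * ‖x - y‖ := by
          apply mul_le_mul_of_nonneg_right (hηθ _ hzc θ₁ θ₂) (norm_nonneg _)
  have hmain : μ * ‖x - y‖ ^ 2 ≤ Lηθ * ‖θ₁ - θ₂‖ * ‖x - y‖ := le_trans hlower hupper
  rw [div_mul_eq_mul_div, le_div_iff₀ hμ]
  nlinarith [hmain, hd]
end

section
/- Fix θ ∈ F and δ ≥ 0. If η₁, …, η_B ∈ 𝒳 satisfy (1/B)·Σ_{i=1}^B ‖∇_η A_i(η_i, θ)‖² ≤ δ², then ‖(1/B)·Σ_{i=1}^B ∇_θ A_i(η_i, θ) − (1/B)·Σ_{i=1}^B ∇_θ A_i(η_i*(θ), θ)‖ ≤ L_θη·δ/μ. -/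
open scoped RealInnerProductSpace

lemma strong_concave_dist_le
    {E : Type*} [NormedAddCommGroup E] [InnerProductSpace ℝ E]
    (𝒳 : Set E) (h𝒳cv : Convex ℝ 𝒳) (f : E → ℝ) (g : E → E) (μ : ℝ) (hμ : 0 < μ)
    (hconc : ∀ η₁ ∈ 𝒳, ∀ η₂ ∈ 𝒳,
      f η₁ ≤ f η₂ + ⟪g η₂, η₁ - η₂⟫ - μ / 2 * ‖η₁ - η₂‖ ^ 2)
    (x : E) (hx : x ∈ 𝒳) (s : E) (hs : s ∈ 𝒳) (hmax : ∀ y ∈ 𝒳, f y ≤ f s) :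
    ‖x - s‖ ≤ ‖g x‖ / μ := by
  set d := s - x with hd
  set N := ‖d‖ ^ 2 with hN
  have hN0 : (0:ℝ) ≤ N := by positivity
  -- Step 1 : f x ≤ f s - μ/2 * N
  have key : ∀ t ∈ Set.Ioc (0:ℝ) 1, f x - f s ≤ -(μ/2) * (1-t) * N := by
    intro t ht
    obtain ⟨ht0, ht1⟩ := ht
    set p := (1-t) • s + t • x with hp
    have hpX : p ∈ 𝒳 := h𝒳cv hs hx (by linarith) ht0.le (by ring)
    have e1 : s - p = t • d := by rw [hp, hd]; module
    have e2 : x - p = -((1-t) • d) := by rw [hp, hd]; module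
    have n1 : ‖t • d‖ ^ 2 = t ^ 2 * N := by
      rw [norm_smul, Real.norm_eq_abs, abs_of_pos ht0, mul_pow, hN]
    have n2 : ‖-((1-t) • d)‖ ^ 2 = (1-t) ^ 2 * N := by
      rw [norm_neg, norm_smul, Real.norm_eq_abs, abs_of_nonneg (by linarith), mul_pow, hN]
    have i1 := hconc s hs p hpX
    have i2 := hconc x hx p hpX
    rw [e1, real_inner_smul_right, n1] at i1
    rw [e2, inner_neg_right, real_inner_smul_right, n2] at i2
    have hmp := hmax p hpX
    have hmul : t * (f x - f s) ≤ t * (-(μ/2) * (1-t) * N) := by nlinarith [mul_le_mul_of_nonneg_left i1 (by linarith : (0:ℝ) ≤ 1 - t), mul_le_mul_of_nonneg_left i2 ht0.le]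
    exact le_of_mul_le_mul_left hmul ht0
  have step1 : f x - f s ≤ -(μ/2) * (1-0) * N := by
    have hlim : Filter.Tendsto (fun t : ℝ => -(μ/2) * (1-t) * N) (nhdsWithin 0 (Set.Ioi 0))
        (nhds (-(μ/2) * (1-0) * N)) :=
      ((by continuity : Continuous fun t : ℝ => -(μ/2) * (1-t) * N).tendsto 0).mono_left
        nhdsWithin_le_nhds
    exact ge_of_tendsto hlim (Filter.eventually_of_mem
      (Ioc_mem_nhdsGT_of_mem ⟨le_refl 0, one_pos⟩) key)
  have i3 := hconc s hs x hx
  have e3 : s - x = d := hd.symm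
  rw [e3] at i3
  have hNd : ‖s - x‖ ^ 2 = N := by rw [e3]
  rw [hNd] at i3
  -- μ * N ≤ ⟪g x, d⟫
  have hCS : ⟪g x, d⟫ ≤ ‖g x‖ * ‖d‖ := real_inner_le_norm _ _
  have hμN : μ * N ≤ ‖g x‖ * ‖d‖ := by nlinarith
  rcases eq_or_ne ‖d‖ 0 with h0 | h0
  · have : ‖x - s‖ = 0 := by rw [norm_sub_rev]; exact h0
    rw [this]; positivity
  · have hdpos : 0 < ‖d‖ := lt_of_le_of_ne (norm_nonneg _) (Ne.symm h0)
    have hgoal : ‖x - s‖ = ‖d‖ := by rw [norm_sub_rev]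
    rw [hgoal, le_div_iff₀ hμ]
    have hfin : (‖d‖ * μ) * ‖d‖ ≤ ‖g x‖ * ‖d‖ := by nlinarith [hμN]
    exact le_of_mul_le_mul_right hfin hdpos

/-- Lemma on approximate gradients: if the average squared gradient norm of the
adversary's objectives at the chosen perturbations is at most `δ²`, then the averaged
θ-gradient at the chosen perturbations is within `Lθη * δ / μ` of the averaged θ-gradient at
the true maximizers. -/
theorem approx_gradients
    {E F : Type*} [NormedAddCommGroup E] [InnerProductSpace ℝ E] [FiniteDimensional ℝ E]
    [NormedAddCommGroup F] [InnerProductSpace ℝ F] [FiniteDimensional ℝ F]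
    (𝒳 : Set E) (h𝒳ne : 𝒳.Nonempty) (h𝒳cp : IsCompact 𝒳) (h𝒳cv : Convex ℝ 𝒳)
    (B : ℕ) (hB : 1 ≤ B)
    (A : Fin B → E → F → ℝ)
    (hA : ∀ i, Differentiable ℝ (fun q : E × F => A i q.1 q.2))
    (μ Lθη : ℝ) (hμ : 0 < μ) (hLθη : 0 ≤ Lθη)
    -- (i) μ-strong concavity of each `A i (·, θ)` on 𝒳
    (hconc : ∀ i, ∀ θ : F, ∀ η₁ ∈ 𝒳, ∀ η₂ ∈ 𝒳,
      A i η₁ θ ≤ A i η₂ θ + ⟪gradient (fun η => A i η θ) η₂, η₁ - η₂⟫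
        - μ / 2 * ‖η₁ - η₂‖ ^ 2)
    -- (ii) Lipschitz condition of `∇_θ A i` in η
    (hθη : ∀ i, ∀ η₁ ∈ 𝒳, ∀ η₂ ∈ 𝒳, ∀ θ : F,
      ‖gradient (A i η₁) θ - gradient (A i η₂) θ‖ ≤ Lθη * ‖η₁ - η₂‖)
    -- ηᵢ*(θ): the unique maximizer of `A i (·, θ)` over 𝒳
    (ηstar : Fin B → F → E)
    (hmem : ∀ i θ, ηstar i θ ∈ 𝒳)
    (hmax : ∀ i θ, ∀ η ∈ 𝒳, A i η θ ≤ A i (ηstar i θ) θ)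
    (huniq : ∀ i θ, ∀ η ∈ 𝒳, (∀ η' ∈ 𝒳, A i η' θ ≤ A i η θ) → η = ηstar i θ)
    -- the data of the statement
    (θ : F) (δ : ℝ) (hδ : 0 ≤ δ)
    (η : Fin B → E) (hη : ∀ i, η i ∈ 𝒳)
    (hsmall : (1 / B : ℝ) * ∑ i, ‖gradient (fun w => A i w θ) (η i)‖ ^ 2 ≤ δ ^ 2) :
    ‖(1 / B : ℝ) • ∑ i, gradient (A i (η i)) θ
        - (1 / B : ℝ) • ∑ i, gradient (A i (ηstar i θ)) θ‖ ≤ Lθη * δ / μ := by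
  have hBpos : (0:ℝ) < B := by exact_mod_cast Nat.lt_of_lt_of_le Nat.zero_lt_one hB
  set a : Fin B → ℝ := fun i => ‖gradient (fun w => A i w θ) (η i)‖ with ha
  have hdist : ∀ i, ‖η i - ηstar i θ‖ ≤ a i / μ := fun i =>
    strong_concave_dist_le 𝒳 h𝒳cv (fun w => A i w θ)
      (fun w => gradient (fun z => A i z θ) w) μ hμ (hconc i θ)
      (η i) (hη i) (ηstar i θ) (hmem i θ) (hmax i θ)
  have hterm : ∀ i, ‖gradient (A i (η i)) θ - gradient (A i (ηstar i θ)) θ‖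
      ≤ Lθη / μ * a i := by
    intro i
    refine (hθη i (η i) (hη i) (ηstar i θ) (hmem i θ) θ).trans ?_
    have := mul_le_mul_of_nonneg_left (hdist i) hLθη
    calc Lθη * ‖η i - ηstar i θ‖ ≤ Lθη * (a i / μ) := this
      _ = Lθη / μ * a i := by ring
  -- Cauchy–Schwarz step: (1/B) * ∑ a i ≤ δ
  have ha0 : ∀ i, 0 ≤ a i := fun i => norm_nonneg _
  have hsum0 : 0 ≤ ∑ i, a i := Finset.sum_nonneg fun i _ => ha0 i
  have hCS : (∑ i, a i) ^ 2 ≤ (B : ℝ) * ∑ i, (a i) ^ 2 := by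
    have := sq_sum_le_card_mul_sum_sq (s := Finset.univ) (f := a)
    simpa using this
  have hsq : ∑ i, (a i) ^ 2 ≤ (B:ℝ) * δ ^ 2 := by
    rw [div_mul_eq_mul_div, div_le_iff₀ hBpos, one_mul, mul_comm] at hsmall
    exact hsmall
  have hsum : ∑ i, a i ≤ (B:ℝ) * δ := by
    have h2 : (∑ i, a i) ^ 2 ≤ ((B:ℝ) * δ) ^ 2 := by nlinarith
    exact le_of_pow_le_pow_left₀ two_ne_zero (by positivity) h2
  have havg : (1 / B : ℝ) * ∑ i, a i ≤ δ := by
    rw [div_mul_eq_mul_div, div_le_iff₀ hBpos, one_mul]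
    exact hsum.trans_eq (mul_comm _ _)
  -- put it together
  calc ‖(1 / B : ℝ) • ∑ i, gradient (A i (η i)) θ
        - (1 / B : ℝ) • ∑ i, gradient (A i (ηstar i θ)) θ‖
      = ‖(1 / B : ℝ) • ∑ i, (gradient (A i (η i)) θ - gradient (A i (ηstar i θ)) θ)‖ := by
        rw [← smul_sub, Finset.sum_sub_distrib]
    _ = (1 / B : ℝ) * ‖∑ i, (gradient (A i (η i)) θ - gradient (A i (ηstar i θ)) θ)‖ := by
        rw [norm_smul, Real.norm_eq_abs, abs_of_pos (by positivity)]
    _ ≤ (1 / B : ℝ) * ∑ i, ‖gradient (A i (η i)) θ - gradient (A i (ηstar i θ)) θ‖ := by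
        apply mul_le_mul_of_nonneg_left (norm_sum_le _ _) (by positivity)
    _ ≤ (1 / B : ℝ) * ∑ i, (Lθη / μ * a i) := by
        apply mul_le_mul_of_nonneg_left (Finset.sum_le_sum fun i _ => hterm i) (by positivity)
    _ = (Lθη / μ) * ((1 / B : ℝ) * ∑ i, a i) := by rw [← Finset.mul_sum]; ring
    _ ≤ (Lθη / μ) * δ := by
        apply mul_le_mul_of_nonneg_left havg (by positivity)
    _ = Lθη * δ / μ := by ring
end

section
/- There exists a constant C′ > 0 depending only on T and K such that for all initial states z, z′ ∈ X₀, the first costates satisfy ‖p₁(z) − p₁(z′)‖ ≤ C′·‖z − z′‖. -/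
open scoped RealInnerProductSpace

set_option maxHeartbeats 1600000

/-- there is a constant `C' > 0` depending only on `T` and `K` such that the
first costate is `C'`-Lipschitz in the initial state: `‖p₁(z) - p₁(z')‖ ≤ C' * ‖z - z'‖`. -/
theorem first_costate_lipschitz
    (T : ℕ) (hT : 1 ≤ T) (K : ℝ) (hK : 1 ≤ K) :
    ∃ C' > (0 : ℝ),
      ∀ (X : ℕ → Type)
        [∀ t, NormedAddCommGroup (X t)] [∀ t, InnerProductSpace ℝ (X t)]
        [∀ t, FiniteDimensional ℝ (X t)]
        (f : ∀ t, X t → X (t + 1)) (R : ∀ t, X t → ℝ) (Φ : X T → ℝ),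
        (∀ t, t < T → Differentiable ℝ (f t)) →
        (∀ t, t < T → Differentiable ℝ (R t)) →
        Differentiable ℝ Φ →
        (∀ t, t < T → ∀ x : X t, ‖fderiv ℝ (f t) x‖ ≤ K) →
        (∀ t, t < T → ∀ x x' : X t,
          ‖fderiv ℝ (f t) x - fderiv ℝ (f t) x'‖ ≤ K * ‖x - x'‖) →
        (∀ t, t < T → ∀ x : X t, ‖gradient (R t) x‖ ≤ K) →
        (∀ t, t < T → ∀ x x' : X t,
          ‖gradient (R t) x - gradient (R t) x'‖ ≤ K * ‖x - x'‖) →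
        (∀ y : X T, ‖gradient Φ y‖ ≤ K) →
        (∀ y y' : X T, ‖gradient Φ y - gradient Φ y'‖ ≤ K * ‖y - y'‖) →
        ∀ (x : X 0 → ∀ t, X t) (p : X 0 → ∀ t, X t),
        (∀ z, x z 0 = z) →
        (∀ z, ∀ t, t < T → x z (t + 1) = f t (x z t)) →
        (∀ z, p z T = -gradient Φ (x z T)) →
        (∀ z, ∀ t, t < T →
          p z t = (fderiv ℝ (f t) (x z t)).adjoint (p z (t + 1)) - gradient (R t) (x z t)) →
        ∀ z z' : X 0, ‖p z 1 - p z' 1‖ ≤ C' * ‖z - z'‖ := by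
  set B : ℝ := (2 * K) ^ (2 * T + 3) with hB
  clear_value B
  have h2K : (2 : ℝ) ≤ 2 * K := by nlinarith
  have hB2 : (2 : ℝ) ≤ B := by
    rw [hB]; exact le_trans h2K (le_self_pow₀ (by linarith) (by omega))
  have hB0 : (0 : ℝ) < B := by linarith
  refine ⟨B ^ T, pow_pos hB0 T, ?_⟩
  intro X _ _ _ f R Φ hfd hRd hΦd hfb hfl hRb hRl hΦb hΦl x p hx0 hxs hpT hps z z'
  set D := ‖z - z'‖ with hD
  have hD0 : 0 ≤ D := norm_nonneg _
  -- f is K-Lipschitz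
  have hflip : ∀ t, t < T → ∀ a b : X t, ‖f t a - f t b‖ ≤ K * ‖a - b‖ := by
    intro t ht a b
    exact Convex.norm_image_sub_le_of_norm_fderiv_le
      (fun y _ => (hfd t ht).differentiableAt) (fun y _ => hfb t ht y)
      convex_univ (Set.mem_univ b) (Set.mem_univ a)
  -- state bound
  have hstate : ∀ t, t ≤ T → ‖x z t - x z' t‖ ≤ K ^ t * D := by
    intro t
    induction t with
    | zero => intro _; simp [hx0, hD]
    | succ t ih =>
      intro ht
      have ht' : t < T := by omega
      rw [hxs z t ht', hxs z' t ht']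
      calc ‖f t (x z t) - f t (x z' t)‖ ≤ K * ‖x z t - x z' t‖ := hflip t ht' _ _
        _ ≤ K * (K ^ t * D) := by
            have := ih (le_of_lt ht')
            nlinarith [norm_nonneg (x z t - x z' t)]
        _ = K ^ (t + 1) * D := by ring
  -- costate norm bound
  have hpbound : ∀ w : X 0, ∀ d t : ℕ, t + d = T → ‖p w t‖ ≤ (2 * K) ^ (d + 1) := by
    intro w d
    induction d with
    | zero =>
      intro t htd
      obtain rfl : t = T := by omega
      rw [hpT w, norm_neg, pow_one]
      linarith [hΦb (x w _)]
    | succ d ih =>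
      intro t htd
      have ht : t < T := by omega
      have hrec := ih (t + 1) (by omega)
      rw [hps w t ht]
      have hadj : ‖(fderiv ℝ (f t) (x w t)).adjoint (p w (t + 1))‖
          ≤ K * (2 * K) ^ (d + 1) := by
        calc ‖(fderiv ℝ (f t) (x w t)).adjoint (p w (t + 1))‖
            ≤ ‖(fderiv ℝ (f t) (x w t)).adjoint‖ * ‖p w (t + 1)‖ :=
              ContinuousLinearMap.le_opNorm _ _
          _ = ‖fderiv ℝ (f t) (x w t)‖ * ‖p w (t + 1)‖ := by
              rw [LinearIsometryEquiv.norm_map ContinuousLinearMap.adjoint]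
          _ ≤ K * (2 * K) ^ (d + 1) := by
              have h1 := hfb t ht (x w t)
              have h2 : (0:ℝ) ≤ ‖p w (t+1)‖ := norm_nonneg _
              nlinarith [norm_nonneg (fderiv ℝ (f t) (x w t)),
                pow_nonneg (by linarith : (0:ℝ) ≤ 2*K) (d+1)]
      calc ‖(fderiv ℝ (f t) (x w t)).adjoint (p w (t + 1)) - gradient (R t) (x w t)‖
          ≤ ‖(fderiv ℝ (f t) (x w t)).adjoint (p w (t + 1))‖ + ‖gradient (R t) (x w t)‖ :=
            norm_sub_le _ _
        _ ≤ K * (2 * K) ^ (d + 1) + K := by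
            have := hRb t ht (x w t); linarith
        _ ≤ (2 * K) ^ (d + 1 + 1) := by
            have hp1 : (1:ℝ) ≤ (2 * K) ^ (d + 1) := by
              have := pow_le_pow_left₀ (by norm_num : (0:ℝ) ≤ 1) (by linarith : (1:ℝ) ≤ 2*K) (d+1)
              simpa using this
            have : (2 * K) ^ (d + 1 + 1) = 2 * K * (2 * K) ^ (d + 1) := by ring
            nlinarith
  -- Lipschitz bound on costates, backwards
  have hLip : ∀ d t : ℕ, t + d = T → ‖p z t - p z' t‖ ≤ B ^ (d + 1) * D := by
    intro d
    induction d with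
    | zero =>
      intro t htd
      obtain rfl : t = T := by omega
      rw [hpT z, hpT z', pow_one]
      have h1 : ‖-gradient Φ (x z t) - -gradient Φ (x z' t)‖
          = ‖gradient Φ (x z t) - gradient Φ (x z' t)‖ := by
        rw [← norm_neg]; congr 1; abel
      rw [h1]
      have h2 := hΦl (x z t) (x z' t)
      have h3 := hstate t le_rfl
      calc ‖gradient Φ (x z t) - gradient Φ (x z' t)‖ ≤ K * ‖x z t - x z' t‖ := h2
        _ ≤ K * (K ^ t * D) := by nlinarith [norm_nonneg (x z t - x z' t)]
        _ = K ^ (t + 1) * D := by ring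
        _ ≤ B * D := by
            have : K ^ (t + 1) ≤ B := by
              rw [hB]
              calc K ^ (t + 1) ≤ (2 * K) ^ (t + 1) :=
                    pow_le_pow_left₀ (by linarith) (by linarith) _
                _ ≤ (2 * K) ^ (2 * t + 3) := pow_le_pow_right₀ (by linarith) (by omega)
            nlinarith
    | succ d ih =>
      intro t htd
      have ht : t < T := by omega
      have hrec := ih (t + 1) (by omega)
      have hq' := hpbound z' d (t + 1) (by omega)
      have hΔ : ‖x z t - x z' t‖ ≤ K ^ T * D := by
        have h1 := hstate t (by omega)
        have h2 : K ^ t ≤ K ^ T := pow_le_pow_right₀ hK (by omega)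
        nlinarith
      set A := fderiv ℝ (f t) (x z t) with hA
      set A' := fderiv ℝ (f t) (x z' t) with hA'
      rw [hps z t ht, hps z' t ht]
      have key : ‖A.adjoint (p z (t+1)) - A'.adjoint (p z' (t+1))‖
          ≤ K * (B ^ (d + 1) * D) + (K * ‖x z t - x z' t‖) * (2 * K) ^ (d + 1) := by
        have e1 : A.adjoint (p z (t+1)) - A'.adjoint (p z' (t+1))
            = A.adjoint (p z (t+1) - p z' (t+1)) + (A.adjoint - A'.adjoint) (p z' (t+1)) := by
          simp only [map_sub, ContinuousLinearMap.sub_apply] <;> abel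
        rw [e1]
        have b1 : ‖A.adjoint (p z (t+1) - p z' (t+1))‖ ≤ K * (B ^ (d + 1) * D) := by
          calc ‖A.adjoint (p z (t+1) - p z' (t+1))‖
              ≤ ‖A.adjoint‖ * ‖p z (t+1) - p z' (t+1)‖ := ContinuousLinearMap.le_opNorm _ _
            _ = ‖A‖ * ‖p z (t+1) - p z' (t+1)‖ := by
                rw [LinearIsometryEquiv.norm_map ContinuousLinearMap.adjoint]
            _ ≤ K * (B ^ (d + 1) * D) := by
                have := hfb t ht (x z t)
                nlinarith [norm_nonneg A, norm_nonneg (p z (t+1) - p z' (t+1)),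
                  mul_nonneg (mul_nonneg (pow_nonneg (le_of_lt hB0) (d+1)) hD0) (le_of_lt hB0)]
        have b2 : ‖(A.adjoint - A'.adjoint) (p z' (t+1))‖
            ≤ (K * ‖x z t - x z' t‖) * (2 * K) ^ (d + 1) := by
          calc ‖(A.adjoint - A'.adjoint) (p z' (t+1))‖
              ≤ ‖A.adjoint - A'.adjoint‖ * ‖p z' (t+1)‖ := ContinuousLinearMap.le_opNorm _ _
            _ = ‖A - A'‖ * ‖p z' (t+1)‖ := by
                rw [← map_sub (ContinuousLinearMap.adjoint : (X t →L[ℝ] X (t+1)) ≃ₗᵢ[ℝ] _),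
                  LinearIsometryEquiv.norm_map]
            _ ≤ (K * ‖x z t - x z' t‖) * (2 * K) ^ (d + 1) := by
                have h1 := hfl t ht (x z t) (x z' t)
                have h2 : (0:ℝ) ≤ ‖p z' (t+1)‖ := norm_nonneg _
                nlinarith [norm_nonneg (A - A'),
                  mul_nonneg (mul_nonneg (by linarith : (0:ℝ) ≤ K)
                    (norm_nonneg (x z t - x z' t)))
                    (pow_nonneg (by linarith : (0:ℝ) ≤ 2*K) (d+1))]
        calc _ ≤ ‖A.adjoint (p z (t+1) - p z' (t+1))‖ + ‖(A.adjoint - A'.adjoint) (p z' (t+1))‖ :=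
              norm_add_le _ _
          _ ≤ _ := by linarith
      have hRstep : ‖gradient (R t) (x z t) - gradient (R t) (x z' t)‖ ≤ K * (K ^ T * D) := by
        have := hRl t ht (x z t) (x z' t)
        nlinarith [norm_nonneg (x z t - x z' t)]
      have e2 : A.adjoint (p z (t+1)) - gradient (R t) (x z t)
          - (A'.adjoint (p z' (t+1)) - gradient (R t) (x z' t))
          = (A.adjoint (p z (t+1)) - A'.adjoint (p z' (t+1)))
            - (gradient (R t) (x z t) - gradient (R t) (x z' t)) := by abel
      rw [e2]
      have total : ‖A.adjoint (p z (t+1)) - A'.adjoint (p z' (t+1))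
          - (gradient (R t) (x z t) - gradient (R t) (x z' t))‖
          ≤ K * (B ^ (d + 1) * D) + (K * (K ^ T * D)) * (2 * K) ^ (d + 1)
            + K * (K ^ T * D) := by
        have := norm_sub_le (A.adjoint (p z (t+1)) - A'.adjoint (p z' (t+1)))
          (gradient (R t) (x z t) - gradient (R t) (x z' t))
        have hmono : (K * ‖x z t - x z' t‖) * (2 * K) ^ (d + 1)
            ≤ (K * (K ^ T * D)) * (2 * K) ^ (d + 1) := by
          have hp := pow_nonneg (by linarith : (0:ℝ) ≤ 2*K) (d+1)
          have h1 : K * ‖x z t - x z' t‖ ≤ K * (K ^ T * D) :=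
            mul_le_mul_of_nonneg_left hΔ (by linarith)
          exact mul_le_mul_of_nonneg_right h1 hp
        linarith
      refine le_trans total ?_
      -- arithmetic: K·B^(d+1)·D + K^(T+1)·(2K)^(d+1)·D + K^(T+1)·D ≤ B^(d+2)·D
      have hKT1 : K ^ (T + 1) * (2 * K) ^ (d + 1) + K ^ (T + 1) ≤ B := by
        have a1 : K ^ (T + 1) ≤ (2 * K) ^ (T + 1) :=
          pow_le_pow_left₀ (by linarith) (by linarith) _
        have a2 : K ^ (T + 1) * (2 * K) ^ (d + 1) ≤ (2 * K) ^ (T + d + 2) := by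
          calc K ^ (T + 1) * (2 * K) ^ (d + 1) ≤ (2 * K) ^ (T + 1) * (2 * K) ^ (d + 1) := by
                have := pow_nonneg (by linarith : (0:ℝ) ≤ 2*K) (d+1)
                nlinarith [pow_nonneg (by linarith : (0:ℝ) ≤ K) (T+1)]
            _ = (2 * K) ^ (T + d + 2) := by rw [← pow_add]; ring_nf
        have a3 : (2 * K) ^ (T + d + 2) ≤ (2 * K) ^ (2 * T + 2) :=
          pow_le_pow_right₀ (by linarith) (by omega)
        have a4 : K ^ (T + 1) ≤ (2 * K) ^ (2 * T + 2) :=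
          le_trans a1 (pow_le_pow_right₀ (by linarith) (by omega))
        have a5 : (2 : ℝ) * (2 * K) ^ (2 * T + 2) ≤ B := by
          rw [hB, show 2 * T + 3 = (2 * T + 2) + 1 from rfl, pow_succ]
          calc (2:ℝ) * (2 * K) ^ (2 * T + 2) = (2 * K) ^ (2 * T + 2) * 2 := by ring
            _ ≤ (2 * K) ^ (2 * T + 2) * (2 * K) :=
                mul_le_mul_of_nonneg_left h2K (pow_nonneg (by linarith) _)
        linarith
      have h2KB : (2:ℝ) * (2 * K) ≤ B := by
        rw [hB]
        calc (2:ℝ) * (2*K) ≤ (2*K) * (2*K) := by nlinarith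
          _ = (2*K) ^ 2 := by ring
          _ ≤ (2*K) ^ (2*T+3) := pow_le_pow_right₀ (by linarith) (by omega)
      have hKB : K ≤ B / 2 := by linarith
      have hBd : (2 : ℝ) ≤ B ^ (d + 1) := le_trans hB2 (le_self_pow₀ (by linarith) (by omega))
      have main : K * B ^ (d + 1) + B ≤ B ^ (d + 1 + 1) := by
        have h1 : K * B ^ (d + 1) ≤ (B / 2) * B ^ (d + 1) :=
          mul_le_mul_of_nonneg_right hKB (pow_nonneg (le_of_lt hB0) _)
        have h2 : B ≤ (B / 2) * B ^ (d + 1) := by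
          have := mul_le_mul_of_nonneg_left hBd (by linarith : (0:ℝ) ≤ B / 2)
          linarith
        have h3 : (B / 2) * B ^ (d + 1) + (B / 2) * B ^ (d + 1) = B ^ (d + 1 + 1) := by
          rw [pow_succ]; ring
        linarith
      calc K * (B ^ (d + 1) * D) + (K * (K ^ T * D)) * (2 * K) ^ (d + 1) + K * (K ^ T * D)
          = (K * B ^ (d + 1) + (K ^ (T+1) * (2 * K) ^ (d + 1) + K ^ (T+1))) * D := by ring
        _ ≤ (K * B ^ (d + 1) + B) * D :=
            mul_le_mul_of_nonneg_right (by linarith) hD0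
        _ ≤ B ^ (d + 1 + 1) * D :=
            mul_le_mul_of_nonneg_right main hD0
  -- conclude
  have := hLip (T - 1) 1 (by omega)
  have hpow : B ^ (T - 1 + 1) = B ^ T := by congr 1; omega
  rw [hpow] at this
  exact this
end

section
/- There exists a constant C′ > 0 depending only on T and K such that for every fixed input x₀ ∈ X₀, every initial perturbation η⁰ ∈ X₀, every step size α > 0, every n ≥ 1, and every ℓ ∈ {0, …, n−1}, the frozen-gradient iterates η^{ℓ+1} = η^ℓ − α·(Df₀(x₀ + η^ℓ))* p₁(x₀ + η⁰) satisfy ‖p₁(x₀ + η⁰) − p₁(x₀ + η^ℓ)‖ ≤ C′·α·(n−1). -/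
open scoped RealInnerProductSpace

set_option maxHeartbeats 1600000

/-- Lemma 1 / Lemma 4: there is a constant `C' > 0` depending only on `T` and `K`
such that along the frozen-gradient iterates
`η^{ℓ+1} = η^ℓ - α • (Df₀(x₀ + η^ℓ))* p₁(x₀ + η0)`,
the first costates satisfy `‖p₁(x₀ + η0) - p₁(x₀ + η^ℓ)‖ ≤ C' * α * (n - 1)`
for all `ℓ ∈ {0, …, n-1}`. -/
theorem frozen_costate_deviation
    (T : ℕ) (hT : 1 ≤ T) (K : ℝ) (hK : 1 ≤ K) :
    ∃ C' > (0 : ℝ),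
      ∀ (X : ℕ → Type)
        [∀ t, NormedAddCommGroup (X t)] [∀ t, InnerProductSpace ℝ (X t)]
        [∀ t, FiniteDimensional ℝ (X t)]
        (f : ∀ t, X t → X (t + 1)) (R : ∀ t, X t → ℝ) (Φ : X T → ℝ),
        (∀ t, t < T → Differentiable ℝ (f t)) →
        (∀ t, t < T → Differentiable ℝ (R t)) →
        Differentiable ℝ Φ →
        (∀ t, t < T → ∀ x : X t, ‖fderiv ℝ (f t) x‖ ≤ K) →
        (∀ t, t < T → ∀ x x' : X t,
          ‖fderiv ℝ (f t) x - fderiv ℝ (f t) x'‖ ≤ K * ‖x - x'‖) →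
        (∀ t, t < T → ∀ x : X t, ‖gradient (R t) x‖ ≤ K) →
        (∀ t, t < T → ∀ x x' : X t,
          ‖gradient (R t) x - gradient (R t) x'‖ ≤ K * ‖x - x'‖) →
        (∀ y : X T, ‖gradient Φ y‖ ≤ K) →
        (∀ y y' : X T, ‖gradient Φ y - gradient Φ y'‖ ≤ K * ‖y - y'‖) →
        ∀ (x : X 0 → ∀ t, X t) (p : X 0 → ∀ t, X t),
        (∀ z, x z 0 = z) →
        (∀ z, ∀ t, t < T → x z (t + 1) = f t (x z t)) →
        (∀ z, p z T = -gradient Φ (x z T)) →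
        (∀ z, ∀ t, t < T →
          p z t = (fderiv ℝ (f t) (x z t)).adjoint (p z (t + 1)) - gradient (R t) (x z t)) →
        -- the frozen-gradient iterates of the adversary
        ∀ (x₀ η0 : X 0) (α : ℝ), 0 < α → ∀ n : ℕ, 1 ≤ n →
        ∀ η : ℕ → X 0, η 0 = η0 →
        (∀ ℓ, ℓ < n →
          η (ℓ + 1) = η ℓ - α • (fderiv ℝ (f 0) (x₀ + η ℓ)).adjoint (p (x₀ + η0) 1)) →
        ∀ ℓ, ℓ < n →
          ‖p (x₀ + η0) 1 - p (x₀ + η ℓ) 1‖ ≤ C' * α * ((n : ℝ) - 1) := by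
  have hK0 : (0 : ℝ) < K := lt_of_lt_of_le one_pos hK
  set B : ℝ := ((T : ℝ) + 1) * K ^ (T + 1) with hBdef
  have hB0 : (0 : ℝ) < B := by positivity
  set D : ℝ := K ^ (T + 1) * (B + 1) with hDdef
  have hD0 : (0 : ℝ) < D := by positivity
  set L : ℝ := ((T : ℝ) + 1) * K ^ T * D with hLdef
  have hL0 : (0 : ℝ) < L := by positivity
  refine ⟨L * (K * B), by positivity, ?_⟩
  intro X _ _ _ f R Φ hf hR hΦ hDf hDfL hgR hgRL hgΦ hgΦL x p hx0 hxs hpT hps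
    x₀ η0 α hα n hn η hη0 hηrec ℓ hℓ
  -- f t is K-Lipschitz
  have hfLip : ∀ t, t < T → ∀ a b : X t, ‖f t a - f t b‖ ≤ K * ‖a - b‖ := by
    intro t ht a b
    exact Convex.norm_image_sub_le_of_norm_fderiv_le
      (fun y _ => (hf t ht).differentiableAt) (fun y _ => hDf t ht y)
      convex_univ (Set.mem_univ b) (Set.mem_univ a)
  -- state Lipschitz in initial condition
  have hxLip : ∀ t, t ≤ T → ∀ z z' : X 0, ‖x z t - x z' t‖ ≤ K ^ t * ‖z - z'‖ := by
    intro t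
    induction t with
    | zero => intro _ z z'; simp [hx0]
    | succ t ih =>
      intro ht z z'
      have htT : t < T := lt_of_lt_of_le (Nat.lt_succ_self t) ht
      rw [hxs z t htT, hxs z' t htT]
      calc ‖f t (x z t) - f t (x z' t)‖ ≤ K * ‖x z t - x z' t‖ := hfLip t htT _ _
        _ ≤ K * (K ^ t * ‖z - z'‖) := by
            have := ih (le_of_lt htT) z z'
            nlinarith [norm_nonneg (x z t - x z' t)]
        _ = K ^ (t + 1) * ‖z - z'‖ := by ring
  have hKpow : ∀ t : ℕ, t ≤ T → K ^ t ≤ K ^ T := fun t ht => pow_le_pow_right₀ hK ht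
  -- costate norm bound
  have hpBj : ∀ j, j ≤ T → ∀ z : X 0, ‖p z (T - j)‖ ≤ ((j : ℝ) + 1) * K ^ (j + 1) := by
    intro j
    induction j with
    | zero =>
      intro _ z
      simp only [Nat.sub_zero, hpT z, norm_neg]
      simpa using (hgΦ (x z T)).trans (by nlinarith [pow_pos hK0 1])
    | succ j ih =>
      intro hj z
      have ht : T - (j + 1) < T := by omega
      have hts : T - (j + 1) + 1 = T - j := by omega
      have hprev : ‖p z (T - j)‖ ≤ ((j : ℝ) + 1) * K ^ (j + 1) := ih (by omega) z
      rw [hps z _ ht]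
      have hadj : ‖(fderiv ℝ (f _) (x z (T - (j+1)))).adjoint (p z (T - (j+1) + 1))‖
          ≤ K * (((j : ℝ) + 1) * K ^ (j + 1)) := by
        calc ‖(fderiv ℝ (f _) (x z (T - (j+1)))).adjoint (p z (T - (j+1) + 1))‖
            ≤ ‖(fderiv ℝ (f _) (x z (T - (j+1)))).adjoint‖ * ‖p z (T - (j+1) + 1)‖ :=
              ContinuousLinearMap.le_opNorm _ _
          _ ≤ K * (((j : ℝ) + 1) * K ^ (j + 1)) := by
              rw [LinearIsometryEquiv.norm_map]
              have h1 := hDf _ ht (x z (T - (j+1)))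
              have h2 : ‖p z (T - (j+1) + 1)‖ ≤ ((j : ℝ) + 1) * K ^ (j + 1) := by
                rw [hts]; exact hprev
              exact mul_le_mul h1 h2 (norm_nonneg _) (le_trans zero_le_one hK)
      calc ‖(fderiv ℝ (f _) (x z (T - (j+1)))).adjoint (p z (T - (j+1) + 1))
            - gradient (R _) (x z (T - (j+1)))‖
          ≤ ‖(fderiv ℝ (f _) (x z (T - (j+1)))).adjoint (p z (T - (j+1) + 1))‖
            + ‖gradient (R _) (x z (T - (j+1)))‖ := norm_sub_le _ _
        _ ≤ K * (((j : ℝ) + 1) * K ^ (j + 1)) + K := by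
            have := hgR _ ht (x z (T - (j+1)))
            linarith
        _ ≤ ((j : ℝ) + 1 + 1) * K ^ (j + 1 + 1) := by
            have h1 : K * (((j : ℝ) + 1) * K ^ (j + 1)) = ((j : ℝ) + 1) * K ^ (j + 2) := by ring
            have h2 : K ≤ K ^ (j + 2) := by
              calc K = K ^ 1 := (pow_one K).symm
                _ ≤ K ^ (j + 2) := pow_le_pow_right₀ hK (by omega)
            push_cast
            nlinarith
        _ = (((j + 1 : ℕ) : ℝ) + 1) * K ^ (j + 1 + 1) := by push_cast; ring
  have hpB : ∀ t, t ≤ T → ∀ z : X 0, ‖p z t‖ ≤ B := by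
    intro t ht z
    have h := hpBj (T - t) (by omega) z
    rw [show T - (T - t) = t by omega] at h
    refine h.trans ?_
    rw [hBdef]
    have h1 : ((T : ℝ) - (t : ℝ)) + 1 ≤ (T : ℝ) + 1 := by
      have : (0:ℝ) ≤ (t : ℝ) := Nat.cast_nonneg t
      linarith
    have hc : ((T - t : ℕ) : ℝ) = (T : ℝ) - (t : ℝ) := by
      push_cast [Nat.cast_sub ht]; ring
    rw [hc]
    have h2 : K ^ (T - t + 1) ≤ K ^ (T + 1) := pow_le_pow_right₀ hK (by omega)
    have h3 : (0:ℝ) ≤ (T : ℝ) - (t : ℝ) + 1 := by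
      have : (t : ℝ) ≤ (T : ℝ) := by exact_mod_cast ht
      linarith
    nlinarith [pow_pos hK0 (T - t + 1)]
  -- costate Lipschitz in initial condition
  have hpLipj : ∀ j, j ≤ T → ∀ z z' : X 0,
      ‖p z (T - j) - p z' (T - j)‖ ≤ ((j : ℝ) + 1) * K ^ j * D * ‖z - z'‖ := by
    intro j
    induction j with
    | zero =>
      intro _ z z'
      simp only [Nat.sub_zero, hpT z, hpT z']
      rw [show -gradient Φ (x z T) - -gradient Φ (x z' T)
          = -(gradient Φ (x z T) - gradient Φ (x z' T)) by abel, norm_neg]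
      calc ‖gradient Φ (x z T) - gradient Φ (x z' T)‖ ≤ K * ‖x z T - x z' T‖ := hgΦL _ _
        _ ≤ K * (K ^ T * ‖z - z'‖) := by
            have := hxLip T le_rfl z z'
            nlinarith [norm_nonneg (x z T - x z' T)]
        _ ≤ ((0 : ℝ) + 1) * K ^ 0 * D * ‖z - z'‖ := by
            have hD1 : K ^ (T + 1) ≤ D := by
              rw [hDdef]; nlinarith [pow_pos hK0 (T + 1)]
            have : K * K ^ T = K ^ (T + 1) := by ring
            simp only [pow_zero]
            nlinarith [norm_nonneg (z - z'), pow_pos hK0 (T + 1)]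
        _ = (((0:ℕ) : ℝ) + 1) * K ^ 0 * D * ‖z - z'‖ := by norm_num
    | succ j ih =>
      intro hj z z'
      have ht : T - (j + 1) < T := by omega
      have hts : T - (j + 1) + 1 = T - j := by omega
      set t := T - (j + 1) with htdef
      have hprev : ‖p z (t + 1) - p z' (t + 1)‖ ≤ ((j : ℝ) + 1) * K ^ j * D * ‖z - z'‖ := by
        rw [htdef, hts]; exact ih (by omega) z z'
      rw [hps z t ht, hps z' t ht]
      have key : (fderiv ℝ (f t) (x z t)).adjoint (p z (t + 1)) - gradient (R t) (x z t)
          - ((fderiv ℝ (f t) (x z' t)).adjoint (p z' (t + 1)) - gradient (R t) (x z' t))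
          = (fderiv ℝ (f t) (x z t)).adjoint (p z (t + 1) - p z' (t + 1))
            + ((fderiv ℝ (f t) (x z t)).adjoint (p z' (t + 1))
              - (fderiv ℝ (f t) (x z' t)).adjoint (p z' (t + 1)))
            - (gradient (R t) (x z t) - gradient (R t) (x z' t)) := by
        simp only [map_sub]
        abel
      rw [key]
      have e1 : ‖(fderiv ℝ (f t) (x z t)).adjoint (p z (t + 1) - p z' (t + 1))‖
          ≤ K * (((j : ℝ) + 1) * K ^ j * D * ‖z - z'‖) := by
        calc ‖(fderiv ℝ (f t) (x z t)).adjoint (p z (t + 1) - p z' (t + 1))‖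
            ≤ ‖(fderiv ℝ (f t) (x z t)).adjoint‖ * ‖p z (t + 1) - p z' (t + 1)‖ :=
              ContinuousLinearMap.le_opNorm _ _
          _ ≤ K * (((j : ℝ) + 1) * K ^ j * D * ‖z - z'‖) := by
              rw [LinearIsometryEquiv.norm_map]
              exact mul_le_mul (hDf t ht _) hprev (norm_nonneg _) (le_trans zero_le_one hK)
      have e2 : ‖(fderiv ℝ (f t) (x z t)).adjoint (p z' (t + 1))
            - (fderiv ℝ (f t) (x z' t)).adjoint (p z' (t + 1))‖
          ≤ K * (K ^ t * ‖z - z'‖) * B := by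
        calc ‖(fderiv ℝ (f t) (x z t)).adjoint (p z' (t + 1))
              - (fderiv ℝ (f t) (x z' t)).adjoint (p z' (t + 1))‖
            = ‖((fderiv ℝ (f t) (x z t)).adjoint - (fderiv ℝ (f t) (x z' t)).adjoint)
                (p z' (t + 1))‖ := by rw [ContinuousLinearMap.sub_apply]
          _ ≤ ‖(fderiv ℝ (f t) (x z t)).adjoint - (fderiv ℝ (f t) (x z' t)).adjoint‖
              * ‖p z' (t + 1)‖ := ContinuousLinearMap.le_opNorm _ _
          _ ≤ K * (K ^ t * ‖z - z'‖) * B := by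
              have hnd : ‖(fderiv ℝ (f t) (x z t)).adjoint - (fderiv ℝ (f t) (x z' t)).adjoint‖
                  ≤ K * (K ^ t * ‖z - z'‖) := by
                rw [← map_sub, LinearIsometryEquiv.norm_map]
                calc ‖fderiv ℝ (f t) (x z t) - fderiv ℝ (f t) (x z' t)‖
                    ≤ K * ‖x z t - x z' t‖ := hDfL t ht _ _
                  _ ≤ K * (K ^ t * ‖z - z'‖) := by
                      have := hxLip t (le_of_lt ht) z z'
                      nlinarith [norm_nonneg (x z t - x z' t)]
              have hpb : ‖p z' (t + 1)‖ ≤ B := hpB (t + 1) (by omega) z'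
              exact mul_le_mul hnd hpb (norm_nonneg _)
                (by positivity)
          -- done
      have e3 : ‖gradient (R t) (x z t) - gradient (R t) (x z' t)‖ ≤ K * (K ^ t * ‖z - z'‖) := by
        calc ‖gradient (R t) (x z t) - gradient (R t) (x z' t)‖
            ≤ K * ‖x z t - x z' t‖ := hgRL t ht _ _
          _ ≤ K * (K ^ t * ‖z - z'‖) := by
              have := hxLip t (le_of_lt ht) z z'
              nlinarith [norm_nonneg (x z t - x z' t)]
      have tri : ‖(fderiv ℝ (f t) (x z t)).adjoint (p z (t + 1) - p z' (t + 1))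
            + ((fderiv ℝ (f t) (x z t)).adjoint (p z' (t + 1))
              - (fderiv ℝ (f t) (x z' t)).adjoint (p z' (t + 1)))
            - (gradient (R t) (x z t) - gradient (R t) (x z' t))‖
          ≤ ‖(fderiv ℝ (f t) (x z t)).adjoint (p z (t + 1) - p z' (t + 1))‖
            + ‖(fderiv ℝ (f t) (x z t)).adjoint (p z' (t + 1))
              - (fderiv ℝ (f t) (x z' t)).adjoint (p z' (t + 1))‖
            + ‖gradient (R t) (x z t) - gradient (R t) (x z' t)‖ :=
        (norm_sub_le _ _).trans (by gcongr; exact norm_add_le _ _)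
      refine tri.trans ?_
      have hKt1 : K ^ (t + 1) ≤ K ^ (T + 1) := pow_le_pow_right₀ hK (by omega)
      have hDb : K ^ (t + 1) * (B + 1) ≤ D := by
        rw [hDdef]
        nlinarith [pow_pos hK0 (t + 1)]
      have hstep : K * (K ^ t * ‖z - z'‖) * B + K * (K ^ t * ‖z - z'‖) ≤ D * ‖z - z'‖ := by
        have : K * (K ^ t * ‖z - z'‖) * B + K * (K ^ t * ‖z - z'‖)
            = K ^ (t + 1) * (B + 1) * ‖z - z'‖ := by ring
        rw [this]
        nlinarith [norm_nonneg (z - z')]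
      have hfin : K * (((j : ℝ) + 1) * K ^ j * D * ‖z - z'‖) + D * ‖z - z'‖
          ≤ (((j : ℕ) + 1 : ℕ) + 1 : ℝ) * K ^ (j + 1) * D * ‖z - z'‖ := by
        push_cast
        have h1 : K * (((j : ℝ) + 1) * K ^ j * D) = ((j : ℝ) + 1) * K ^ (j + 1) * D := by ring
        have h2 : D ≤ K ^ (j + 1) * D := by
          nlinarith [one_le_pow₀ (n := j + 1) hK]
        nlinarith [norm_nonneg (z - z'), pow_pos hK0 (j + 1), mul_nonneg (norm_nonneg (z - z')) hD0.le]
      push_cast at hfin ⊢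
      linarith
  have hpLip1 : ∀ z z' : X 0, ‖p z 1 - p z' 1‖ ≤ L * ‖z - z'‖ := by
    intro z z'
    have h := hpLipj (T - 1) (by omega) z z'
    rw [show T - (T - 1) = 1 by omega] at h
    refine h.trans ?_
    rw [hLdef]
    have hc : ((T - 1 : ℕ) : ℝ) + 1 ≤ (T : ℝ) + 1 := by
      have : ((T - 1 : ℕ) : ℝ) ≤ (T : ℝ) := by exact_mod_cast Nat.sub_le T 1
      linarith
    have hp2 : K ^ (T - 1) ≤ K ^ T := pow_le_pow_right₀ hK (Nat.sub_le T 1)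
    have hm : (((T - 1 : ℕ) : ℝ) + 1) * K ^ (T - 1) ≤ ((T : ℝ) + 1) * K ^ T :=
      mul_le_mul hc hp2 (by positivity) (by positivity)
    nlinarith [sub_nonneg.mpr hm, mul_nonneg hD0.le (norm_nonneg (z - z'))]
  -- iterate drift bound
  have hiter : ∀ m, m < n → ‖η m - η0‖ ≤ (m : ℝ) * (α * (K * B)) := by
    intro m
    induction m with
    | zero => intro _; simp [hη0]
    | succ m ih =>
      intro hm
      have hmn : m < n := by omega
      rw [hηrec m hmn]
      have step : ‖α • (fderiv ℝ (f 0) (x₀ + η m)).adjoint (p (x₀ + η0) 1)‖ ≤ α * (K * B) := by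
        rw [norm_smul, Real.norm_eq_abs, abs_of_pos hα]
        have h1 : ‖(fderiv ℝ (f 0) (x₀ + η m)).adjoint (p (x₀ + η0) 1)‖ ≤ K * B := by
          calc ‖(fderiv ℝ (f 0) (x₀ + η m)).adjoint (p (x₀ + η0) 1)‖
              ≤ ‖(fderiv ℝ (f 0) (x₀ + η m)).adjoint‖ * ‖p (x₀ + η0) 1‖ :=
                ContinuousLinearMap.le_opNorm _ _
            _ ≤ K * B := by
                rw [LinearIsometryEquiv.norm_map]
                exact mul_le_mul (hDf 0 hT _) (hpB 1 hT _) (norm_nonneg _)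
                  (le_trans zero_le_one hK)
        nlinarith [h1, norm_nonneg ((fderiv ℝ (f 0) (x₀ + η m)).adjoint (p (x₀ + η0) 1))]
      calc ‖η m - α • (fderiv ℝ (f 0) (x₀ + η m)).adjoint (p (x₀ + η0) 1) - η0‖
          ≤ ‖η m - η0‖ + ‖α • (fderiv ℝ (f 0) (x₀ + η m)).adjoint (p (x₀ + η0) 1)‖ := by
            rw [show η m - α • (fderiv ℝ (f 0) (x₀ + η m)).adjoint (p (x₀ + η0) 1) - η0
                = (η m - η0) - α • (fderiv ℝ (f 0) (x₀ + η m)).adjoint (p (x₀ + η0) 1) by abel]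
            exact norm_sub_le _ _
        _ ≤ (m : ℝ) * (α * (K * B)) + α * (K * B) := add_le_add (ih hmn) step
        _ = ((m : ℝ) + 1) * (α * (K * B)) := by ring
        _ = (((m + 1 : ℕ)) : ℝ) * (α * (K * B)) := by push_cast; ring
  -- finish
  have hlast := hpLip1 (x₀ + η0) (x₀ + η ℓ)
  have hnorm : ‖(x₀ + η0) - (x₀ + η ℓ)‖ = ‖η ℓ - η0‖ := by
    rw [show (x₀ + η0) - (x₀ + η ℓ) = -(η ℓ - η0) by abel, norm_neg]
  rw [hnorm] at hlast
  have hd := hiter ℓ hℓ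
  have hln : (ℓ : ℝ) ≤ (n : ℝ) - 1 := by
    have : (ℓ : ℝ) + 1 ≤ (n : ℝ) := by exact_mod_cast hℓ
    linarith
  calc ‖p (x₀ + η0) 1 - p (x₀ + η ℓ) 1‖ ≤ L * ‖η ℓ - η0‖ := hlast
    _ ≤ L * ((ℓ : ℝ) * (α * (K * B))) := mul_le_mul_of_nonneg_left hd hL0.le
    _ ≤ L * (((n : ℝ) - 1) * (α * (K * B))) := by
        have h0 : (0:ℝ) ≤ α * (K * B) := by positivity
        have h1 : (ℓ : ℝ) * (α * (K * B)) ≤ ((n : ℝ) - 1) * (α * (K * B)) :=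
          mul_le_mul_of_nonneg_right hln h0
        nlinarith [sub_nonneg.mpr h1, hL0.le]
    _ = L * (K * B) * α * ((n : ℝ) - 1) := by ring
end

section
/- Let J : X₀ → ℝ be defined by J(z) = Φ(x_T(z)) + Σ_{t=0}^{T−1} R_t(x_t(z)). Then J is differentiable and its gradient equals the negative of the initial costate: ∇J(z) = −p₀(z) for every z ∈ X₀, where p₀(z) = (Df₀(x₀(z)))* p₁(z) − ∇R₀(x₀(z)). -/
open scoped RealInnerProductSpace

section AuxGradient
variable {E F : Type*} [NormedAddCommGroup E] [InnerProductSpace ℝ E]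
  [NormedAddCommGroup F] [InnerProductSpace ℝ F] [CompleteSpace E] [CompleteSpace F]

lemma inner_gradient'_s8 (h : E → ℝ) (a w : E) : ⟪gradient h a, w⟫ = fderiv ℝ h a w := by
  simp [gradient, InnerProductSpace.toDual_symm_apply]

lemma gradient_comp' (φ : E → F) (ψ : F → ℝ) (a : E)
    (hφ : Differentiable ℝ φ) (hψ : Differentiable ℝ ψ) :
    gradient (fun y => ψ (φ y)) a = (fderiv ℝ φ a).adjoint (gradient ψ (φ a)) := by
  apply ext_inner_right ℝ
  intro w
  rw [inner_gradient'_s8, ContinuousLinearMap.adjoint_inner_left, inner_gradient'_s8]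
  have : fderiv ℝ (fun y => ψ (φ y)) a = (fderiv ℝ ψ (φ a)).comp (fderiv ℝ φ a) :=
    fderiv_comp a (hψ _) (hφ a)
  rw [this]; rfl

lemma gradient_add' (g h : E → ℝ) (a : E) (hg : Differentiable ℝ g) (hh : Differentiable ℝ h) :
    gradient (fun y => g y + h y) a = gradient g a + gradient h a := by
  apply ext_inner_right ℝ
  intro w
  rw [inner_add_left, inner_gradient'_s8, inner_gradient'_s8, inner_gradient'_s8,
    fderiv_fun_add (hg a) (hh a)]
  rfl

end AuxGradient

/-- backpropagation computes the gradient of the total cost: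
the function `J(z) = Φ(x_T(z)) + ∑_{t=0}^{T-1} R_t(x_t(z))` is differentiable, and
`∇J(z) = -p₀(z)`, where `p₀(z) = (Df₀(x₀(z)))* p₁(z) - ∇R₀(x₀(z))` via the costate
recursion at `t = 0`. -/
theorem gradient_eq_neg_costate
    (T : ℕ) (hT : 1 ≤ T)
    (X : ℕ → Type*) [∀ t, NormedAddCommGroup (X t)] [∀ t, InnerProductSpace ℝ (X t)]
    [∀ t, FiniteDimensional ℝ (X t)]
    (f : ∀ t, X t → X (t + 1)) (R : ∀ t, X t → ℝ) (Φ : X T → ℝ)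
    (hfd : ∀ t, t < T → Differentiable ℝ (f t))
    (hRd : ∀ t, t < T → Differentiable ℝ (R t))
    (hΦd : Differentiable ℝ Φ)
    -- state and costate trajectories
    (x : X 0 → ∀ t, X t) (p : X 0 → ∀ t, X t)
    (hx0 : ∀ z, x z 0 = z)
    (hxs : ∀ z, ∀ t, t < T → x z (t + 1) = f t (x z t))
    (hpT : ∀ z, p z T = -gradient Φ (x z T))
    (hps : ∀ z, ∀ t, t < T →
      p z t = (fderiv ℝ (f t) (x z t)).adjoint (p z (t + 1)) - gradient (R t) (x z t))
    -- the total cost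
    (J : X 0 → ℝ)
    (hJ : ∀ z, J z = Φ (x z T) + ∑ t ∈ Finset.range T, R t (x z t)) :
    Differentiable ℝ J ∧ ∀ z : X 0, gradient J z = -(p z 0) := by
  -- downward induction: cost-to-go functions
  have key : ∀ k t, t ≤ T → T - t = k → ∃ G : X t → ℝ, Differentiable ℝ G ∧
      (∀ z, G (x z t) = Φ (x z T) + ∑ s ∈ Finset.Ico t T, R s (x z s)) ∧
      (∀ z, gradient G (x z t) = -(p z t)) := by
    intro k
    induction k with
    | zero =>
      intro t htT hk
      have ht : t = T := le_antisymm htT (Nat.le_of_sub_eq_zero hk)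
      subst ht
      refine ⟨Φ, hΦd, fun z => by simp, fun z => ?_⟩
      rw [hpT z, neg_neg]
    | succ k ih =>
      intro t htT hk
      have ht : t < T := by omega
      obtain ⟨G', hG'd, hG'v, hG'g⟩ := ih (t + 1) (by omega) (by omega)
      refine ⟨fun y => R t y + G' (f t y), (hRd t ht).add (hG'd.comp (hfd t ht)),
        fun z => ?_, fun z => ?_⟩
      · have hstep := hxs z t ht
        show R t (x z t) + G' (f t (x z t)) = _
        rw [← hstep, hG'v z,
          Finset.sum_eq_sum_Ico_succ_bot ht (fun s => R s (x z s))]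
        ring
      · rw [gradient_add' (R t) (fun y => G' (f t y)) (x z t) (hRd t ht)
            (fun y => (hG'd _).comp y ((hfd t ht) y)),
          gradient_comp' (f t) G' _ (hfd t ht) hG'd, ← hxs z t ht, hG'g z,
          map_neg, hps z t ht]
        abel
  obtain ⟨G, hGd, hGv, hGg⟩ := key T 0 (Nat.zero_le T) (Nat.sub_zero T)
  have hJG : J = G := by
    funext z
    rw [hJ z, ← hx0 z, hGv z, Finset.range_eq_Ico]
    rw [hx0 z]
  constructor
  · rw [hJG]; exact hGd
  · intro z
    rw [hJG]
    have := hGg z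
    rwa [hx0 z] at this
end

section
/- There exists a constant C > 0 depending only on T and K such that for every fixed input x₀ ∈ X₀, every η⁰ ∈ X₀, every step size α > 0, every n ≥ 1, and every ℓ ∈ {0, …, n−1}, the frozen-gradient iterates η^{ℓ+1} = η^ℓ − α·(Df₀(x₀ + η^ℓ))* p₁(x₀ + η⁰) satisfy ‖−(Df₀(x₀ + η^ℓ))* p₁(x₀ + η⁰) − ∇A(η^ℓ)‖ ≤ C·α·(n−1); that is, the frozen-costate update direction is a C·α·(n−1)-approximate gradient of the adversary's objective A. -/
set_option maxHeartbeats 2000000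

open scoped RealInnerProductSpace

lemma gradient_comp_adjoint {E F : Type*}
    [NormedAddCommGroup E] [InnerProductSpace ℝ E] [CompleteSpace E]
    [NormedAddCommGroup F] [InnerProductSpace ℝ F] [CompleteSpace F]
    (Φ : F → ℝ) (g : E → F) (pt : E)
    (hΦ : DifferentiableAt ℝ Φ (g pt)) (hg : DifferentiableAt ℝ g pt) :
    gradient (fun w => Φ (g w)) pt
      = (fderiv ℝ g pt).adjoint (gradient Φ (g pt)) := by
  apply ext_inner_right ℝ
  intro v
  rw [ContinuousLinearMap.adjoint_inner_left]
  have h1 : ⟪gradient (fun w => Φ (g w)) pt, v⟫ = fderiv ℝ (fun w => Φ (g w)) pt v := by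
    simp [gradient, InnerProductSpace.toDual_symm_apply]
  have h2 : ⟪gradient Φ (g pt), fderiv ℝ g pt v⟫ = fderiv ℝ Φ (g pt) (fderiv ℝ g pt v) := by
    simp [gradient, InnerProductSpace.toDual_symm_apply]
  rw [h1, h2]
  have := fderiv_comp pt hΦ hg
  rw [show (fun w => Φ (g w)) = Φ ∘ g from rfl, this]
  rfl

/-- there is a constant `C > 0` depending only on `T` and `K` such that the
frozen-costate update direction is a `C * α * (n-1)`-approximate gradient of the adversary's
objective `A(η) = Φ(x_T(x₀ + η))`:
`‖-(Df₀(x₀ + η^ℓ))* p₁(x₀ + η0) - ∇A(η^ℓ)‖ ≤ C * α * (n - 1)` for all `ℓ ∈ {0, …, n-1}`. -/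
theorem frozen_update_approx_gradient
    (T : ℕ) (hT : 1 ≤ T) (K : ℝ) (hK : 1 ≤ K) :
    ∃ C > (0 : ℝ),
      ∀ (X : ℕ → Type)
        [∀ t, NormedAddCommGroup (X t)] [∀ t, InnerProductSpace ℝ (X t)]
        [∀ t, FiniteDimensional ℝ (X t)]
        (f : ∀ t, X t → X (t + 1)) (Φ : X T → ℝ),
        (∀ t, t < T → Differentiable ℝ (f t)) →
        Differentiable ℝ Φ →
        (∀ t, t < T → ∀ x : X t, ‖fderiv ℝ (f t) x‖ ≤ K) →
        (∀ t, t < T → ∀ x x' : X t,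
          ‖fderiv ℝ (f t) x - fderiv ℝ (f t) x'‖ ≤ K * ‖x - x'‖) →
        (∀ y : X T, ‖gradient Φ y‖ ≤ K) →
        (∀ y y' : X T, ‖gradient Φ y - gradient Φ y'‖ ≤ K * ‖y - y'‖) →
        ∀ (x : X 0 → ∀ t, X t) (p : X 0 → ∀ t, X t),
        (∀ z, x z 0 = z) →
        (∀ z, ∀ t, t < T → x z (t + 1) = f t (x z t)) →
        (∀ z, p z T = -gradient Φ (x z T)) →
        (∀ z, ∀ t, t < T →
          p z t = (fderiv ℝ (f t) (x z t)).adjoint (p z (t + 1))) →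
        -- the frozen-gradient iterates of the adversary
        ∀ (x₀ η0 : X 0) (α : ℝ), 0 < α → ∀ n : ℕ, 1 ≤ n →
        ∀ η : ℕ → X 0, η 0 = η0 →
        (∀ ℓ, ℓ < n →
          η (ℓ + 1) = η ℓ - α • (fderiv ℝ (f 0) (x₀ + η ℓ)).adjoint (p (x₀ + η0) 1)) →
        ∀ ℓ, ℓ < n →
          ‖-((fderiv ℝ (f 0) (x₀ + η ℓ)).adjoint (p (x₀ + η0) 1))
              - gradient (fun w : X 0 => Φ (x (x₀ + w) T)) (η ℓ)‖
            ≤ C * α * ((n : ℝ) - 1) := by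
  have hK0 : (0:ℝ) < K := lt_of_lt_of_le one_pos hK
  refine ⟨(T + 1) * K ^ (3 * T + 2),
    by positivity, ?_⟩
  intro X _ _ _ f Φ hfd hΦd hfK hfLip hΦK hΦLip x p hx0 hxs hpT hps x₀ η0 α hα n hn η hη0 hηs
  -- basic facts about the state map z ↦ x z t
  have key : ∀ t, t ≤ T →
      Differentiable ℝ (fun z => x z t) ∧
      (∀ z, ‖fderiv ℝ (fun z => x z t) z‖ ≤ K ^ t) ∧
      (∀ z, (fderiv ℝ (fun z => x z t) z).adjoint (p z t) = p z 0) := by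
    intro t
    induction t with
    | zero =>
      intro _
      have hxe : (fun z : X 0 => x z 0) = id := funext fun z => hx0 z
      refine ⟨by rw [hxe]; exact differentiable_id, ?_, ?_⟩
      · intro z
        rw [hxe, fderiv_id]
        simpa using ContinuousLinearMap.norm_id_le
      · intro z
        rw [hxe, fderiv_id, ContinuousLinearMap.adjoint_id]
        rfl
    | succ t ih =>
      intro ht
      have htT : t < T := ht
      obtain ⟨ihd, ihn, iha⟩ := ih (le_of_lt htT)
      have hxe : (fun z : X 0 => x z (t+1)) = fun z => f t (x z t) :=
        funext fun z => hxs z t htT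
      have hd : Differentiable ℝ (fun z : X 0 => f t (x z t)) :=
        (hfd t htT).comp ihd
      have hfder : ∀ z, fderiv ℝ (fun z : X 0 => x z (t+1)) z
          = (fderiv ℝ (f t) (x z t)).comp (fderiv ℝ (fun z => x z t) z) := by
        intro z
        rw [hxe]
        exact fderiv_comp z ((hfd t htT) (x z t)) (ihd z)
      refine ⟨by rw [hxe]; exact hd, ?_, ?_⟩
      · intro z
        rw [hfder z]
        calc ‖(fderiv ℝ (f t) (x z t)).comp (fderiv ℝ (fun z => x z t) z)‖
            ≤ ‖fderiv ℝ (f t) (x z t)‖ * ‖fderiv ℝ (fun z => x z t) z‖ :=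
              ContinuousLinearMap.opNorm_comp_le _ _
          _ ≤ K * K ^ t := by
              apply mul_le_mul (hfK t htT _) (ihn z) (norm_nonneg _) (le_of_lt hK0)
          _ = K ^ (t+1) := (pow_succ K t).symm ▸ by ring
      · intro z
        rw [hfder z, ContinuousLinearMap.adjoint_comp, ContinuousLinearMap.comp_apply,
          ← hps z t htT]
        exact iha z
  -- Lipschitz property of z ↦ x z t
  have xLip : ∀ t, t ≤ T → ∀ z z' : X 0, ‖x z t - x z' t‖ ≤ K ^ t * ‖z - z'‖ := by
    intro t ht z z'
    obtain ⟨hd, hn, -⟩ := key t ht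
    exact Convex.norm_image_sub_le_of_norm_fderiv_le
      (fun w _ => hd w) (fun w _ => hn w)
      convex_univ (Set.mem_univ z') (Set.mem_univ z)
  -- bound on the costate
  have pbound : ∀ d t, t + d = T → ∀ z, ‖p z t‖ ≤ K ^ (d + 1) := by
    intro d
    induction d with
    | zero =>
      intro t htd z
      have hTt : T = t := by omega
      subst hTt
      rw [hpT z, norm_neg, pow_one]
      exact hΦK _
    | succ d ih =>
      intro t htd z
      have htT : t < T := by omega
      have h1 : (t + 1) + d = T := by omega
      rw [hps z t htT]
      calc ‖(fderiv ℝ (f t) (x z t)).adjoint (p z (t+1))‖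
          ≤ ‖(fderiv ℝ (f t) (x z t)).adjoint‖ * ‖p z (t+1)‖ :=
            ContinuousLinearMap.le_opNorm _ _
        _ ≤ K * K ^ (d + 1) := by
            apply mul_le_mul _ (ih (t+1) h1 z) (norm_nonneg _) (le_of_lt hK0)
            rw [LinearIsometryEquiv.norm_map ContinuousLinearMap.adjoint]
            exact hfK t htT _
        _ = K ^ (d + 1 + 1) := by rw [pow_succ]; ring
  -- Lipschitz property of the costate
  have pLip : ∀ d t, t + d = T → ∀ z z' : X 0,
      ‖p z t - p z' t‖ ≤ (d + 1) * K ^ d * K ^ (T + 1) * ‖z - z'‖ := by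
    intro d
    induction d with
    | zero =>
      intro t htd z z'
      have hTt : T = t := by omega
      subst hTt
      rw [hpT z, hpT z']
      calc ‖-gradient Φ (x z T) - -gradient Φ (x z' T)‖
          = ‖gradient Φ (x z T) - gradient Φ (x z' T)‖ := by
            rw [neg_sub_neg, norm_sub_rev]
        _ ≤ K * ‖x z T - x z' T‖ := hΦLip _ _
        _ ≤ K * (K ^ T * ‖z - z'‖) := by
            apply mul_le_mul_of_nonneg_left (xLip T le_rfl z z') (le_of_lt hK0)
        _ = (((0:ℕ):ℝ) + 1) * K ^ (0:ℕ) * K ^ (T + 1) * ‖z - z'‖ := by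
            push_cast; ring
    | succ d ih =>
      intro t htd z z'
      have htT : t < T := by omega
      have h1 : (t + 1) + d = T := by omega
      rw [hps z t htT, hps z' t htT]
      set A := fderiv ℝ (f t) (x z t)
      set A' := fderiv ℝ (f t) (x z' t)
      have split : A.adjoint (p z (t+1)) - A'.adjoint (p z' (t+1))
          = (A.adjoint - A'.adjoint) (p z (t+1)) + A'.adjoint (p z (t+1) - p z' (t+1)) := by
        simp only [ContinuousLinearMap.sub_apply, map_sub]
        abel
      rw [split]
      have hAA' : ‖A.adjoint - A'.adjoint‖ ≤ K * (K ^ t * ‖z - z'‖) := by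
        have : A.adjoint - A'.adjoint = ContinuousLinearMap.adjoint (A - A') :=
          (ContinuousLinearMap.adjoint.map_sub A A').symm
        rw [this, LinearIsometryEquiv.norm_map ContinuousLinearMap.adjoint]
        calc ‖A - A'‖ ≤ K * ‖x z t - x z' t‖ := hfLip t htT _ _
          _ ≤ K * (K ^ t * ‖z - z'‖) :=
              mul_le_mul_of_nonneg_left (xLip t (le_of_lt htT) z z') (le_of_lt hK0)
      calc ‖(A.adjoint - A'.adjoint) (p z (t+1)) + A'.adjoint (p z (t+1) - p z' (t+1))‖
          ≤ ‖(A.adjoint - A'.adjoint) (p z (t+1))‖ + ‖A'.adjoint (p z (t+1) - p z' (t+1))‖ :=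
            norm_add_le _ _
        _ ≤ ‖A.adjoint - A'.adjoint‖ * ‖p z (t+1)‖
            + ‖A'.adjoint‖ * ‖p z (t+1) - p z' (t+1)‖ :=
            add_le_add (ContinuousLinearMap.le_opNorm _ _) (ContinuousLinearMap.le_opNorm _ _)
        _ ≤ (K * (K ^ t * ‖z - z'‖)) * K ^ (d + 1)
            + K * ((d + 1) * K ^ d * K ^ (T + 1) * ‖z - z'‖) := by
            apply add_le_add
            · exact mul_le_mul hAA' (pbound d (t+1) h1 z) (norm_nonneg _)
                (by positivity)
            · apply mul_le_mul _ (ih (t+1) h1 z z') (norm_nonneg _) (le_of_lt hK0)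
              rw [show A' = fderiv ℝ (f t) (x z' t) from rfl,
                LinearIsometryEquiv.norm_map ContinuousLinearMap.adjoint]
              exact hfK t htT _
        _ ≤ ((d + 1 : ℕ) + 1) * K ^ (d + 1) * K ^ (T + 1) * ‖z - z'‖ := by
            have ht1 : K ^ (t + 1) ≤ K ^ (T + 1) := pow_le_pow_right₀ hK (by omega)
            have e1 : (K * (K ^ t * ‖z - z'‖)) * K ^ (d + 1)
                = K ^ (d+1) * K ^ (t+1) * ‖z - z'‖ := by rw [pow_succ]; ring
            have e2 : K * ((d + 1:ℝ) * K ^ d * K ^ (T + 1) * ‖z - z'‖)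
                = (d+1:ℝ) * K ^ (d+1) * K ^ (T+1) * ‖z - z'‖ := by rw [pow_succ]; ring
            rw [e1, e2]
            push_cast
            nlinarith [norm_nonneg (z - z'), pow_pos hK0 (d+1), pow_pos hK0 (T+1),
              mul_le_mul_of_nonneg_left ht1 (le_of_lt (mul_pos (pow_pos hK0 (d+1))
                (lt_of_lt_of_le zero_lt_one (le_refl 1)))),
              mul_le_mul_of_nonneg_right (mul_le_mul_of_nonneg_left ht1
                (le_of_lt (pow_pos hK0 (d+1)))) (norm_nonneg (z - z'))]
  -- exact gradient formula:  ∇A(η) = -(Df₀(x₀+η))† p(x₀+η) 1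
  have gradA : ∀ w : X 0,
      gradient (fun w : X 0 => Φ (x (x₀ + w) T)) w
        = -((fderiv ℝ (f 0) (x₀ + w)).adjoint (p (x₀ + w) 1)) := by
    intro w
    obtain ⟨hd, -, ha⟩ := key T le_rfl
    -- fderiv of w ↦ x (x₀+w) T
    have htr : HasFDerivAt (fun w : X 0 => x (x₀ + w) T)
        (fderiv ℝ (fun z => x z T) (x₀ + w)) w := by
      have h1 : HasFDerivAt (fun w : X 0 => x₀ + w) (ContinuousLinearMap.id ℝ (X 0)) w :=
        (hasFDerivAt_id w).const_add x₀
      have h2 := ((hd (x₀ + w)).hasFDerivAt).comp w h1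
      simpa [Function.comp_def] using h2
    have hgc := gradient_comp_adjoint Φ (fun w : X 0 => x (x₀ + w) T) w
      (hΦd _) htr.differentiableAt
    rw [hgc, htr.fderiv]
    have h0 : p (x₀ + w) 0 = (fderiv ℝ (f 0) (x₀ + w)).adjoint (p (x₀ + w) 1) := by
      have := hps (x₀ + w) 0 (by omega)
      rwa [hx0 (x₀ + w)] at this
    rw [← h0, ← ha (x₀ + w)]
    have hpTw : gradient Φ (x (x₀ + w) T) = -(p (x₀ + w) T) := by
      rw [hpT]; simp
    rw [hpTw, map_neg]
  -- step bound on the iterates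
  have stepb : ∀ j, j < n → ‖η (j+1) - η j‖ ≤ α * K ^ (T + 1) := by
    intro j hj
    rw [hηs j hj]
    have : η j - α • (fderiv ℝ (f 0) (x₀ + η j)).adjoint (p (x₀ + η0) 1) - η j
        = -(α • (fderiv ℝ (f 0) (x₀ + η j)).adjoint (p (x₀ + η0) 1)) := by abel
    rw [this, norm_neg, norm_smul, Real.norm_eq_abs, abs_of_pos hα]
    apply mul_le_mul_of_nonneg_left _ (le_of_lt hα)
    calc ‖(fderiv ℝ (f 0) (x₀ + η j)).adjoint (p (x₀ + η0) 1)‖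
        ≤ ‖(fderiv ℝ (f 0) (x₀ + η j)).adjoint‖ * ‖p (x₀ + η0) 1‖ :=
          ContinuousLinearMap.le_opNorm _ _
      _ ≤ K * K ^ ((T - 1) + 1) := by
          apply mul_le_mul _ (pbound (T-1) 1 (by omega) _) (norm_nonneg _) (le_of_lt hK0)
          rw [LinearIsometryEquiv.norm_map ContinuousLinearMap.adjoint]
          exact hfK 0 (by omega) _
      _ = K ^ (T + 1) := by
          rw [← pow_succ']
          congr 1
          omega
  -- distance of iterate from start
  have iterb : ∀ ℓ, ℓ ≤ n → ‖η ℓ - η0‖ ≤ ℓ * (α * K ^ (T + 1)) := by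
    intro ℓ
    induction ℓ with
    | zero => intro _; simp [hη0]
    | succ ℓ ih =>
      intro hl
      calc ‖η (ℓ+1) - η0‖ ≤ ‖η (ℓ+1) - η ℓ‖ + ‖η ℓ - η0‖ := norm_sub_le_norm_sub_add_norm_sub _ _ _
        _ ≤ α * K ^ (T + 1) + ℓ * (α * K ^ (T + 1)) :=
            add_le_add (stepb ℓ (by omega)) (ih (by omega))
        _ = (ℓ + 1 : ℕ) * (α * K ^ (T + 1)) := by push_cast; ring
  -- final assembly
  intro ℓ hℓ
  rw [gradA (η ℓ)]
  have err : -((fderiv ℝ (f 0) (x₀ + η ℓ)).adjoint (p (x₀ + η0) 1))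
      - -((fderiv ℝ (f 0) (x₀ + η ℓ)).adjoint (p (x₀ + η ℓ) 1))
      = (fderiv ℝ (f 0) (x₀ + η ℓ)).adjoint (p (x₀ + η ℓ) 1 - p (x₀ + η0) 1) := by
    rw [map_sub]; abel
  rw [err]
  have hz : ‖(x₀ + η ℓ) - (x₀ + η0)‖ = ‖η ℓ - η0‖ := by
    congr 1; abel
  have hd1 : 1 + (T - 1) = T := by omega
  calc ‖(fderiv ℝ (f 0) (x₀ + η ℓ)).adjoint (p (x₀ + η ℓ) 1 - p (x₀ + η0) 1)‖
      ≤ ‖(fderiv ℝ (f 0) (x₀ + η ℓ)).adjoint‖ * ‖p (x₀ + η ℓ) 1 - p (x₀ + η0) 1‖ :=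
        ContinuousLinearMap.le_opNorm _ _
    _ ≤ K * (((T - 1 : ℕ) + 1) * K ^ (T - 1) * K ^ (T + 1) * ‖(x₀ + η ℓ) - (x₀ + η0)‖) := by
        apply mul_le_mul _ (pLip (T-1) 1 hd1 _ _) (norm_nonneg _) (le_of_lt hK0)
        rw [LinearIsometryEquiv.norm_map ContinuousLinearMap.adjoint]
        exact hfK 0 (by omega) _
    _ ≤ K * (((T - 1 : ℕ) + 1) * K ^ (T - 1) * K ^ (T + 1) * (ℓ * (α * K ^ (T + 1)))) := by
        apply mul_le_mul_of_nonneg_left _ (le_of_lt hK0)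
        apply mul_le_mul_of_nonneg_left _ (by positivity)
        rw [hz]
        exact iterb ℓ (le_of_lt hℓ)
    _ = ((T - 1 : ℕ) + 1) * (ℓ : ℝ) * (K ^ (1 + (T - 1) + (T + 1) + (T + 1)) * α) := by
        rw [pow_add, pow_add, pow_add, pow_one]; ring
    _ ≤ ((T : ℝ) + 1) * ((n : ℝ) - 1) * (K ^ (1 + (T - 1) + (T + 1) + (T + 1)) * α) := by
        apply mul_le_mul_of_nonneg_right _ (by positivity)
        apply mul_le_mul
        · push_cast [Nat.cast_sub hT]; linarith
        · have : (ℓ : ℝ) + 1 ≤ n := by exact_mod_cast hℓ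
          linarith
        · positivity
        · positivity
    _ = (T + 1) * K ^ (3 * T + 2) * α * ((n : ℝ) - 1) := by
        rw [show 1 + (T - 1) + (T + 1) + (T + 1) = 3 * T + 2 by omega]
        push_cast
        ring
end

section
/- For every x ∈ E: (μ/4)·‖x − y‖² − ε²/μ ≤ f(x) − f(y) − ⟨g, x − y⟩ ≤ L·‖x − y‖² + ε²/(2L). In particular, an ε-approximate gradient of a μ-strongly convex, L-smooth function is a (δ, μ/2, 2L) inexact first-order oracle with δ = ε²·(2/μ + 1/(2L)). -/
open scoped RealInnerProductSpace

lemma hasDerivAt_line {E : Type*} [NormedAddCommGroup E] [InnerProductSpace ℝ E] [CompleteSpace E]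
    (f : E → ℝ) (hf : Differentiable ℝ f) (y v : E) (t : ℝ) :
    HasDerivAt (fun s : ℝ => f (y + s • v)) ⟪gradient f (y + t • v), v⟫ t := by
  have hc : HasDerivAt (fun s : ℝ => y + s • v) v t := by
    simpa using (hasDerivAt_id t).smul_const v |>.const_add y
  have hg : HasFDerivAt f (InnerProductSpace.toDual ℝ E (gradient f (y + t • v))) (y + t • v) :=
    ((hf (y + t • v)).hasGradientAt).hasFDerivAt
  simpa [Function.comp_def] using hg.comp_hasDerivAt t hc

lemma descent_lemma {E : Type*} [NormedAddCommGroup E] [InnerProductSpace ℝ E] [CompleteSpace E]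
    (f : E → ℝ) (hf : Differentiable ℝ f) (L : ℝ) (hL : 0 < L)
    (hsmooth : ∀ x y : E, ‖gradient f x - gradient f y‖ ≤ L * ‖x - y‖)
    (x y : E) : f x ≤ f y + ⟪gradient f y, x - y⟫ + L / 2 * ‖x - y‖ ^ 2 := by
  set v := x - y with hv
  set φ : ℝ → ℝ := fun t =>
    f y + t * ⟪gradient f y, v⟫ + L / 2 * t ^ 2 * ‖v‖ ^ 2 - f (y + t • v) with hφ
  have hder : ∀ t : ℝ, HasDerivAt φ
      (⟪gradient f y, v⟫ + L * t * ‖v‖ ^ 2 - ⟪gradient f (y + t • v), v⟫) t := by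
    intro t
    have h1 : HasDerivAt (fun t : ℝ =>
        f y + t * ⟪gradient f y, v⟫ + L / 2 * t ^ 2 * ‖v‖ ^ 2)
        (⟪gradient f y, v⟫ + L * t * ‖v‖ ^ 2) t := by
      have := ((hasDerivAt_id t).mul_const (⟪gradient f y, v⟫ : ℝ)).const_add (f y)
      have h2 : HasDerivAt (fun t : ℝ => L / 2 * t ^ 2 * ‖v‖ ^ 2)
          (L * t * ‖v‖ ^ 2) t := by
        have := ((hasDerivAt_pow 2 t).const_mul (L / 2)).mul_const (‖v‖ ^ 2)
        exact this.congr_deriv (by ring)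
      simpa [Pi.add_def] using this.add h2
    simpa [Pi.sub_def, hφ] using h1.sub (hasDerivAt_line f hf y v t)
  have hnonneg : ∀ t ∈ Set.Ici (0 : ℝ),
      0 ≤ ⟪gradient f y, v⟫ + L * t * ‖v‖ ^ 2 - ⟪gradient f (y + t • v), v⟫ := by
    intro t ht
    have h1 : ⟪gradient f (y + t • v) - gradient f y, v⟫ ≤ L * t * ‖v‖ ^ 2 := by
      calc ⟪gradient f (y + t • v) - gradient f y, v⟫
          ≤ ‖gradient f (y + t • v) - gradient f y‖ * ‖v‖ := real_inner_le_norm _ _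
        _ ≤ L * ‖(y + t • v) - y‖ * ‖v‖ :=
            mul_le_mul_of_nonneg_right (hsmooth _ _) (norm_nonneg v)
        _ = L * t * ‖v‖ ^ 2 := by
            rw [add_sub_cancel_left, norm_smul, Real.norm_eq_abs,
              abs_of_nonneg (Set.mem_Ici.mp ht)]; ring
    rw [inner_sub_left] at h1
    linarith
  have hmono : MonotoneOn φ (Set.Ici (0 : ℝ)) := by
    apply monotoneOn_of_deriv_nonneg (convex_Ici 0)
    · exact (Continuous.continuousOn (by
        have : Continuous φ := by
          apply Continuous.sub
          · fun_prop
          · exact (hf.continuous).comp (by fun_prop)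
        exact this))
    · intro t ht
      exact (hder t).differentiableAt.differentiableWithinAt
    · intro t ht
      rw [(hder t).deriv]
      exact hnonneg t (interior_subset ht)
  have h01 : φ 0 ≤ φ 1 := hmono (by simp) (by norm_num) zero_le_one
  simp only [hφ] at h01
  simp only [zero_smul, add_zero, one_smul] at h01
  have hx : y + v = x := by rw [hv]; abel
  rw [hx] at h01
  nlinarith [h01]

theorem approx_gradient_inexact_oracle
    {E : Type*} [NormedAddCommGroup E] [InnerProductSpace ℝ E] [FiniteDimensional ℝ E]
    (f : E → ℝ) (hf : Differentiable ℝ f)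
    (μ L : ℝ) (hμ : 0 < μ) (hμL : μ ≤ L)
    (hsc : ∀ x y : E, f x ≥ f y + ⟪gradient f y, x - y⟫ + μ / 2 * ‖x - y‖ ^ 2)
    (hsmooth : ∀ x y : E, ‖gradient f x - gradient f y‖ ≤ L * ‖x - y‖)
    (y : E) (ε : ℝ) (hε : 0 ≤ ε)
    (g : E) (hg : ‖g - gradient f y‖ ≤ ε) :
    ∀ x : E,
      μ / 4 * ‖x - y‖ ^ 2 - ε ^ 2 / μ ≤ f x - f y - ⟪g, x - y⟫ ∧
      f x - f y - ⟪g, x - y⟫ ≤ L * ‖x - y‖ ^ 2 + ε ^ 2 / (2 * L) := by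
  intro x
  have hL : 0 < L := lt_of_lt_of_le hμ hμL
  set t := ‖x - y‖ with ht
  have ht0 : 0 ≤ t := norm_nonneg _
  have herr : |⟪g - gradient f y, x - y⟫| ≤ ε * t := by
    calc |⟪g - gradient f y, x - y⟫| ≤ ‖g - gradient f y‖ * ‖x - y‖ :=
          abs_real_inner_le_norm _ _
      _ ≤ ε * t := by gcongr
  have herr' : ⟪g, x - y⟫ - ⟪gradient f y, x - y⟫ = ⟪g - gradient f y, x - y⟫ := by
    rw [inner_sub_left]
  have hlo := hsc x y
  have hhi := descent_lemma f hf L hL hsmooth x y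
  have habs := abs_le.mp herr
  constructor
  · -- lower bound
    have h1 : f x - f y - ⟪g, x - y⟫ ≥ μ / 2 * t ^ 2 - ε * t := by
      have : ⟪g, x - y⟫ ≤ ⟪gradient f y, x - y⟫ + ε * t := by linarith [habs.2, herr'.symm ▸ habs.2]
      nlinarith [habs.2, herr']
    have h2 : ε * t - μ / 4 * t ^ 2 ≤ ε ^ 2 / μ := by
      rw [le_div_iff₀ hμ]; nlinarith [sq_nonneg (μ * t - 2 * ε)]
    linarith
  · have h1 : f x - f y - ⟪g, x - y⟫ ≤ L / 2 * t ^ 2 + ε * t := by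
      nlinarith [habs.1, herr']
    have h3 : ε * t - L / 2 * t ^ 2 ≤ ε ^ 2 / (2 * L) := by
      rw [le_div_iff₀ (by positivity)]; nlinarith [sq_nonneg (L * t - ε)]
    linarith
end

section
/- With γ = min{1/(2L), √(Δ/(L·N·σ²))}, the iterates satisfy (1/N)·Σ_{k=0}^{N−1} E[‖∇R(θ_k)‖²] ≤ 8LΔ/N + 8σ·√(LΔ/N) + 8ρ². -/
open scoped RealInnerProductSpace
open MeasureTheory


section Descent
variable {F : Type*} [NormedAddCommGroup F] [InnerProductSpace ℝ F] [CompleteSpace F]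

lemma sgd_descent_lemma (R : F → ℝ) (hRd : Differentiable ℝ R) {L : ℝ} (hL : 0 ≤ L)
    (hsmooth : ∀ a b : F, ‖gradient R a - gradient R b‖ ≤ L * ‖a - b‖) (a v : F) :
    R (a + v) ≤ R a + ⟪gradient R a, v⟫ + L / 2 * ‖v‖ ^ 2 := by
  set c : ℝ := ⟪gradient R a, v⟫ with hc
  set φ : ℝ → ℝ := fun t => R (a + t • v) - t * c - L / 2 * ‖v‖ ^ 2 * t ^ 2 with hφ
  have hline : ∀ t : ℝ, HasDerivAt (fun t : ℝ => a + t • v) v t := by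
    intro t
    simpa using ((hasDerivAt_id t).smul_const v).const_add a
  have hR' : ∀ t : ℝ, HasDerivAt (fun t : ℝ => R (a + t • v))
      ⟪gradient R (a + t • v), v⟫ t := by
    intro t
    have hf := (hRd (a + t • v)).hasGradientAt
    rw [hasGradientAt_iff_hasFDerivAt] at hf
    simpa [Function.comp_def] using hf.comp_hasDerivAt t (hline t)
  have hφ' : ∀ t : ℝ, HasDerivAt φ
      (⟪gradient R (a + t • v), v⟫ - c - L * ‖v‖ ^ 2 * t) t := by
    intro t
    have h1 : HasDerivAt (fun t : ℝ => t * c) c t := by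
      simpa using (hasDerivAt_id t).mul_const c
    have h2 : HasDerivAt (fun t : ℝ => L / 2 * ‖v‖ ^ 2 * t ^ 2)
        (L / 2 * ‖v‖ ^ 2 * (2 * t)) t := by
      simpa using (hasDerivAt_pow 2 t).const_mul (L / 2 * ‖v‖ ^ 2)
    have := ((hR' t).sub h1).sub h2
    exact this.congr_deriv (by ring)
  have hanti : AntitoneOn φ (Set.Icc 0 1) := by
    refine antitoneOn_of_deriv_nonpos (convex_Icc 0 1) ?_ ?_ ?_
    · exact fun t _ => ((hφ' t).continuousAt).continuousWithinAt
    · exact fun t _ => ((hφ' t).differentiableAt).differentiableWithinAt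
    · intro t ht
      rw [interior_Icc] at ht
      rw [(hφ' t).deriv]
      have h1 : ⟪gradient R (a + t • v), v⟫ - c = ⟪gradient R (a + t • v) - gradient R a, v⟫ := by
        rw [inner_sub_left]
      have h2 : ⟪gradient R (a + t • v) - gradient R a, v⟫ ≤ L * t * ‖v‖ ^ 2 := by
        refine le_trans (real_inner_le_norm _ _) ?_
        have h3 : ‖gradient R (a + t • v) - gradient R a‖ ≤ L * (t * ‖v‖) := by
          have := hsmooth (a + t • v) a
          simpa [norm_smul, abs_of_nonneg ht.1.le, mul_assoc] using this
        calc ‖gradient R (a + t • v) - gradient R a‖ * ‖v‖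
            ≤ (L * (t * ‖v‖)) * ‖v‖ := by
              exact mul_le_mul_of_nonneg_right h3 (norm_nonneg v)
          _ = L * t * ‖v‖ ^ 2 := by ring
      linarith [h1, h2]
  have h10 : φ 1 ≤ φ 0 := hanti (by norm_num) (by norm_num) (by norm_num)
  have e0 : φ 0 = R a := by simp [hφ]
  have e1 : φ 1 = R (a + v) - c - L / 2 * ‖v‖ ^ 2 := by simp [hφ]
  rw [e0, e1] at h10
  linarith

lemma sgd_growth_lemma (R : F → ℝ) (hRd : Differentiable ℝ R) {L : ℝ} (hL : 0 ≤ L)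
    (hsmooth : ∀ a b : F, ‖gradient R a - gradient R b‖ ≤ L * ‖a - b‖) (a x : F) :
    |R x - R a| ≤ ‖gradient R a‖ * ‖x - a‖ + 3 * L / 2 * ‖x - a‖ ^ 2 := by
  have hup := sgd_descent_lemma R hRd hL hsmooth a (x - a)
  have hdown := sgd_descent_lemma R hRd hL hsmooth x (a - x)
  rw [add_sub_cancel] at hup
  rw [add_sub_cancel] at hdown
  have h1 : ⟪gradient R a, x - a⟫ ≤ ‖gradient R a‖ * ‖x - a‖ := by
    refine le_trans (real_inner_le_norm _ _) le_rfl
  have h2 : ⟪gradient R x, a - x⟫ ≤ ‖gradient R x‖ * ‖x - a‖ := by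
    have := real_inner_le_norm (gradient R x) (a - x)
    rwa [norm_sub_rev a x] at this
  have h3 : ‖gradient R x‖ ≤ ‖gradient R a‖ + L * ‖x - a‖ := by
    have := hsmooth x a
    have h4 := norm_sub_norm_le (gradient R x) (gradient R a)
    linarith
  have hax : ‖a - x‖ = ‖x - a‖ := norm_sub_rev a x
  rw [hax] at hdown
  rw [abs_le]
  constructor
  · nlinarith [norm_nonneg (x - a), sq_nonneg ‖x - a‖,
      mul_le_mul_of_nonneg_right h3 (norm_nonneg (x - a))]
  · nlinarith [norm_nonneg (x - a)]

end Descent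


lemma sgd_integrable_inner' {Ω : Type*} [MeasurableSpace Ω] {μ : Measure Ω}
    {F : Type*} [NormedAddCommGroup F] [InnerProductSpace ℝ F]
    {f g : Ω → F} (hf : MemLp f 2 μ) (hg : MemLp g 2 μ) :
    Integrable (fun ω => ⟪f ω, g ω⟫) μ := by
  have h := L2.integrable_inner (𝕜 := ℝ) (hf.toLp f) (hg.toLp g)
  refine h.congr ?_
  filter_upwards [hf.coeFn_toLp, hg.coeFn_toLp] with ω h1 h2
  rw [h1, h2]

lemma sgd_integrable_mul' {Ω : Type*} [MeasurableSpace Ω] {μ : Measure Ω}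
    {f g : Ω → ℝ} (hf : MemLp f 2 μ) (hg : MemLp g 2 μ) :
    Integrable (fun ω => f ω * g ω) μ := by
  have := sgd_integrable_inner' (F := ℝ) hf hg
  simpa [RCLike.inner_apply, mul_comm] using this

lemma sgd_condexp_clm' {Ω : Type*} {m mΩ : MeasurableSpace Ω} (hm : m ≤ mΩ)
    {μ : Measure Ω} [IsFiniteMeasure μ]
    {E E' : Type*} [NormedAddCommGroup E] [NormedSpace ℝ E] [CompleteSpace E]
    [NormedAddCommGroup E'] [NormedSpace ℝ E'] [CompleteSpace E']
    (T : E →L[ℝ] E') {f : Ω → E} (hf : Integrable f μ) :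
    μ[fun ω => T (f ω)|m] =ᵐ[μ] fun ω => T ((μ[f|m]) ω) := by
  refine (ae_eq_condExp_of_forall_setIntegral_eq hm (T.integrable_comp hf)
    (fun s _ _ => (T.integrable_comp integrable_condExp).integrableOn)
    (fun s hs hμs => ?_) ?_).symm
  · rw [T.integral_comp_comm integrable_condExp.integrableOn,
      setIntegral_condExp hm hf hs, T.integral_comp_comm hf.integrableOn]
  · exact (T.continuous.comp_stronglyMeasurable
      stronglyMeasurable_condExp).aestronglyMeasurable

lemma sgd_integral_inner_zero {Ω : Type*} {m mΩ : MeasurableSpace Ω} (hm : m ≤ mΩ)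
    {μ : Measure Ω} [IsProbabilityMeasure μ]
    {F : Type*} [NormedAddCommGroup F] [InnerProductSpace ℝ F] [FiniteDimensional ℝ F]
    {X n : Ω → F} (hX : StronglyMeasurable[m] X)
    (hXL2 : MemLp X 2 μ) (hnL2 : MemLp n 2 μ)
    (hn0 : μ[n|m] =ᵐ[μ] 0) :
    ∫ ω, ⟪X ω, n ω⟫ ∂μ = 0 := by
  set b := stdOrthonormalBasis ℝ F with hb
  have hsum : ∀ ω, ⟪X ω, n ω⟫ = ∑ i, ⟪X ω, b i⟫ * ⟪b i, n ω⟫ :=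
    fun ω => (b.sum_inner_mul_inner (X ω) (n ω)).symm
  have hXi2 : ∀ i, MemLp (fun ω => ⟪X ω, b i⟫) 2 μ := by
    intro i
    have : (fun ω => ⟪X ω, b i⟫) = fun ω => (innerSL ℝ (b i)) (X ω) := by
      funext ω; simp [real_inner_comm]
    rw [this]
    exact (innerSL ℝ (b i)).comp_memLp' hXL2
  have hni2 : ∀ i, MemLp (fun ω => ⟪b i, n ω⟫) 2 μ :=
    fun i => (innerSL ℝ (b i)).comp_memLp' hnL2
  have hXiSM : ∀ i, StronglyMeasurable[m] (fun ω => ⟪X ω, b i⟫) := by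
    intro i
    have : Continuous (fun z : F => ⟪z, b i⟫) := by
      have : (fun z : F => ⟪z, b i⟫) = fun z => (innerSL ℝ (b i)) z := by
        funext z; simp [real_inner_comm]
      rw [this]; exact (innerSL ℝ (b i)).continuous
    exact this.comp_stronglyMeasurable hX
  have hni0 : ∀ i, μ[(fun ω => ⟪b i, n ω⟫)|m] =ᵐ[μ] 0 := by
    intro i
    have h1 := sgd_condexp_clm' hm (innerSL ℝ (b i)) (hnL2.integrable one_le_two)
    refine h1.trans ?_
    filter_upwards [hn0] with ω hω
    simp only [hω]
    simp
  have hint : ∀ i, Integrable (fun ω => ⟪X ω, b i⟫ * ⟪b i, n ω⟫) μ :=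
    fun i => sgd_integrable_mul' (hXi2 i) (hni2 i)
  calc ∫ ω, ⟪X ω, n ω⟫ ∂μ
      = ∫ ω, ∑ i, ⟪X ω, b i⟫ * ⟪b i, n ω⟫ ∂μ := by
        exact integral_congr_ae (Filter.Eventually.of_forall hsum)
    _ = ∑ i, ∫ ω, ⟪X ω, b i⟫ * ⟪b i, n ω⟫ ∂μ :=
        integral_finset_sum _ (fun i _ => hint i)
    _ = 0 := by
        refine Finset.sum_eq_zero (fun i _ => ?_)
        have h2 := condExp_mul_of_stronglyMeasurable_left (hXiSM i) (hint i)
          ((hni2 i).integrable one_le_two)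
        have h3 : μ[(fun ω => ⟪X ω, b i⟫ * ⟪b i, n ω⟫)|m] =ᵐ[μ] 0 := by
          refine h2.trans ?_
          filter_upwards [hni0 i] with ω hω
          simp only [Pi.mul_apply, hω]
          simp
        rw [← integral_condExp hm (f := fun ω => ⟪X ω, b i⟫ * ⟪b i, n ω⟫)]
        rw [integral_congr_ae h3]
        simp

set_option maxHeartbeats 4000000

/-- abstract form of the main convergence theorem: stochastic gradient descent
with a biased, bounded-error gradient oracle on an `L`-smooth function bounded below, with
step size `γ = min(1/(2L), √(Δ/(L N σ²)))`, satisfies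
`(1/N) ∑_{k<N} E[‖∇R(θ_k)‖²] ≤ 8LΔ/N + 8σ√(LΔ/N) + 8ρ²`. -/
theorem sgd_inexact_oracle_convergence
    {F : Type*} [NormedAddCommGroup F] [InnerProductSpace ℝ F] [FiniteDimensional ℝ F]
    (R : F → ℝ) (hRd : Differentiable ℝ R)
    (L : ℝ) (hL : 0 < L)
    (hsmooth : ∀ a b : F, ‖gradient R a - gradient R b‖ ≤ L * ‖a - b‖)
    (hbdd : BddBelow (Set.range R))
    (θ₀ : F) (Δ : ℝ) (hΔpos : 0 < Δ) (hΔ : R θ₀ - (⨅ w, R w) ≤ Δ)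
    {Ω : Type*} {mΩ : MeasurableSpace Ω} (P : Measure Ω) [IsProbabilityMeasure P]
    (𝔉 : Filtration ℕ mΩ)
    (σ ρ : ℝ) (hσ : 0 < σ) (hρ : 0 ≤ ρ)
    (N : ℕ) (hN : 1 ≤ N)
    (γ : ℝ) (hγ : γ = min (1 / (2 * L)) (Real.sqrt (Δ / (L * N * σ ^ 2))))
    (θ g e : ℕ → Ω → F)
    -- θ_k is 𝔉_k-measurable, θ₀ constant
    (hθmeas : ∀ k, StronglyMeasurable[𝔉 k] (θ k))
    (hθ0 : ∀ ω, θ 0 ω = θ₀)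
    -- unbiased stochastic gradient with bounded conditional variance
    (hgint : ∀ k, Integrable (g k) P)
    (hg2int : ∀ k, Integrable (fun ω => ‖g k ω - gradient R (θ k ω)‖ ^ 2) P)
    (hunbiased : ∀ k, P[g k | 𝔉 k] =ᵐ[P] fun ω => gradient R (θ k ω))
    (hvar : ∀ k, ∀ᵐ ω ∂P,
      (P[(fun ω' => ‖g k ω' - gradient R (θ k ω')‖ ^ 2) | 𝔉 k]) ω ≤ σ ^ 2)
    -- bounded inexact-oracle error
    (herr : ∀ k, ∀ᵐ ω ∂P, ‖e k ω‖ ≤ ρ)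
    -- the updates
    (hstep : ∀ k ω, θ (k + 1) ω = θ k ω - γ • (g k ω + e k ω)) :
    (1 / N : ℝ) * ∑ k ∈ Finset.range N, ∫ ω, ‖gradient R (θ k ω)‖ ^ 2 ∂P
      ≤ 8 * L * Δ / N + 8 * σ * Real.sqrt (L * Δ / N) + 8 * ρ ^ 2 := by
  -- basic positivity facts
  have hNpos : (0:ℝ) < N := by exact_mod_cast Nat.lt_of_lt_of_le Nat.zero_lt_one hN
  set s : ℝ := Real.sqrt (Δ / (L * N * σ ^ 2)) with hs_def
  have hs_arg_pos : 0 < Δ / (L * N * σ ^ 2) := by positivity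
  have hs_pos : 0 < s := Real.sqrt_pos.2 hs_arg_pos
  have hγpos : 0 < γ := by rw [hγ]; exact lt_min (by positivity) hs_pos
  have hγ2L : γ ≤ 1 / (2 * L) := by rw [hγ]; exact min_le_left _ _
  have hγs : γ ≤ s := by rw [hγ]; exact min_le_right _ _
  have hLγ : L * γ ≤ 1 / 2 := by
    have h := mul_le_mul_of_nonneg_left hγ2L hL.le
    calc L * γ ≤ L * (1 / (2 * L)) := h
      _ = 1 / 2 := by field_simp [ne_of_gt hL]
  have hLγ2 : L * γ ^ 2 ≤ γ / 2 := by nlinarith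
  -- abbreviations
  set X : ℕ → Ω → F := fun k ω => gradient R (θ k ω) with hX_def
  set n : ℕ → Ω → F := fun k ω => g k ω - X k ω with hn_def
  have hgeq : ∀ k ω, g k ω = X k ω + n k ω := by intro k ω; simp [hn_def]
  have hgradLip : LipschitzWith (Real.toNNReal L) (gradient R) := by
    refine LipschitzWith.of_dist_le_mul (fun a b => ?_)
    simpa [dist_eq_norm, Real.coe_toNNReal L hL.le] using hsmooth a b
  have hXSM : ∀ k, StronglyMeasurable[𝔉 k] (X k) :=
    fun k => hgradLip.continuous.comp_stronglyMeasurable (hθmeas k)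
  have hθSM : ∀ k, AEStronglyMeasurable (θ k) P :=
    fun k => ((hθmeas k).mono (𝔉.le k)).aestronglyMeasurable
  have hXaes : ∀ k, AEStronglyMeasurable (X k) P :=
    fun k => ((hXSM k).mono (𝔉.le k)).aestronglyMeasurable
  have hnaes : ∀ k, AEStronglyMeasurable (n k) P :=
    fun k => (hgint k).aestronglyMeasurable.sub (hXaes k)
  have hnL2 : ∀ k, MemLp (n k) 2 P :=
    fun k => (memLp_two_iff_integrable_sq_norm (hnaes k)).2 (hg2int k)
  have heaes : ∀ k, AEStronglyMeasurable (e k) P := by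
    intro k
    have he_eq : e k = fun ω => γ⁻¹ • (θ k ω - θ (k + 1) ω) - g k ω := by
      funext ω
      rw [hstep k ω]
      rw [sub_sub_cancel, smul_smul, inv_mul_cancel₀ (ne_of_gt hγpos), one_smul]
      abel
    rw [he_eq]
    exact (((hθSM k).sub (hθSM (k+1))).const_smul γ⁻¹).sub (hgint k).aestronglyMeasurable
  have heL2 : ∀ k, MemLp (e k) 2 P := by
    intro k
    refine MemLp.of_le (memLp_const ρ) (heaes k) ?_
    filter_upwards [herr k] with ω hω
    rwa [Real.norm_eq_abs, abs_of_nonneg hρ]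
  have hXL2of : ∀ k, MemLp (θ k) 2 P → MemLp (X k) 2 P := by
    intro k hθk
    have hG : MemLp (fun ω => ‖gradient R θ₀‖ + L * ‖θ k ω - θ₀‖) 2 P := by
      exact (memLp_const (‖gradient R θ₀‖)).add (((hθk.sub (memLp_const θ₀)).norm).const_mul L)
    refine MemLp.of_le hG (hXaes k) ?_
    refine Filter.Eventually.of_forall (fun ω => ?_)
    have h1 : ‖X k ω - gradient R θ₀‖ ≤ L * ‖θ k ω - θ₀‖ := hsmooth (θ k ω) θ₀
    have h2 : ‖X k ω‖ - ‖gradient R θ₀‖ ≤ ‖X k ω - gradient R θ₀‖ :=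
      norm_sub_norm_le _ _
    have h3 : (0:ℝ) ≤ ‖gradient R θ₀‖ + L * ‖θ k ω - θ₀‖ := by positivity
    rw [Real.norm_eq_abs, abs_of_nonneg h3]
    linarith
  have hθL2 : ∀ k, MemLp (θ k) 2 P := by
    intro k
    induction k with
    | zero =>
        have : θ 0 = fun _ => θ₀ := funext hθ0
        rw [this]; exact memLp_const _
    | succ k ih =>
        have hX2 := hXL2of k ih
        have hg2 : MemLp (g k) 2 P := by
          have : g k = fun ω => X k ω + n k ω := funext (hgeq k)
          rw [this]; exact hX2.add (hnL2 k)
        have hstep' : θ (k+1) = fun ω => θ k ω - γ • (g k ω + e k ω) := funext (hstep k)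
        rw [hstep']
        exact ih.sub ((hg2.add (heL2 k)).const_smul γ)
  have hXL2 : ∀ k, MemLp (X k) 2 P := fun k => hXL2of k (hθL2 k)
  have hVint : ∀ k, Integrable (fun ω => ‖X k ω‖ ^ 2) P :=
    fun k => (memLp_two_iff_integrable_sq_norm (hXaes k)).1 (hXL2 k)
  have hRint : ∀ k, Integrable (fun ω => R (θ k ω)) P := by
    intro k
    have hθθ0 : MemLp (fun ω => θ k ω - θ₀) 2 P := (hθL2 k).sub (memLp_const θ₀)
    have hbnd : Integrable (fun ω =>
        |R θ₀| + (‖gradient R θ₀‖ * ‖θ k ω - θ₀‖ + 3 * L / 2 * ‖θ k ω - θ₀‖ ^ 2)) P := by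
      refine (integrable_const _).add ?_
      refine Integrable.add ?_ ?_
      · exact ((hθθ0.norm.integrable one_le_two)).const_mul _
      · exact ((memLp_two_iff_integrable_sq_norm hθθ0.aestronglyMeasurable).1
          hθθ0).const_mul _
    refine Integrable.mono' hbnd
      (hRd.continuous.comp_aestronglyMeasurable (hθSM k)) ?_
    refine Filter.Eventually.of_forall (fun ω => ?_)
    have h := sgd_growth_lemma R hRd hL.le hsmooth θ₀ (θ k ω)
    have h2 : |R (θ k ω)| - |R θ₀| ≤ |R (θ k ω) - R θ₀| := by
      exact abs_sub_abs_le_abs_sub _ _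
    rw [Real.norm_eq_abs]
    linarith
  -- conditional expectation facts
  have hXint : ∀ k, Integrable (X k) P := fun k => (hXL2 k).integrable one_le_two
  have hn0 : ∀ k, P[n k | 𝔉 k] =ᵐ[P] 0 := by
    intro k
    have h1 := condExp_sub (m := 𝔉 k) (hgint k) (hXint k)
    have h2 : P[X k | 𝔉 k] = X k :=
      condExp_of_stronglyMeasurable (𝔉.le k) (hXSM k) (hXint k)
    have h3 : n k = fun ω => g k ω - X k ω := rfl
    rw [h3]
    refine (condExp_sub (m := 𝔉 k) (hgint k) (hXint k)).trans ?_
    filter_upwards [hunbiased k] with ω hg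
    have hXx := congrFun h2 ω
    simp only [Pi.sub_apply, hg, hXx, Pi.zero_apply]
    simp [hX_def]
  have hzero : ∀ k, ∫ ω, ⟪X k ω, n k ω⟫ ∂P = 0 :=
    fun k => sgd_integral_inner_zero (𝔉.le k) (hXSM k) (hXL2 k) (hnL2 k) (hn0 k)
  have hn2 : ∀ k, ∫ ω, ‖n k ω‖ ^ 2 ∂P ≤ σ ^ 2 := by
    intro k
    have h1 : ∫ ω, ‖n k ω‖ ^ 2 ∂P
        = ∫ ω, (P[(fun ω' => ‖g k ω' - gradient R (θ k ω')‖ ^ 2) | 𝔉 k]) ω ∂P := by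
      rw [integral_condExp (𝔉.le k) (f := fun ω' => ‖g k ω' - gradient R (θ k ω')‖ ^ 2)]
    rw [h1]
    calc ∫ ω, (P[(fun ω' => ‖g k ω' - gradient R (θ k ω')‖ ^ 2) | 𝔉 k]) ω ∂P
        ≤ ∫ _, σ ^ 2 ∂P := integral_mono_ae integrable_condExp (integrable_const _) (hvar k)
      _ = σ ^ 2 := by simp
  have hXnint : ∀ k, Integrable (fun ω => ⟪X k ω, n k ω⟫) P :=
    fun k => sgd_integrable_inner' (hXL2 k) (hnL2 k)
  have hAnonneg : ∀ k, 0 ≤ ∫ ω, ‖X k ω‖ ^ 2 ∂P :=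
    fun k => integral_nonneg (fun ω => sq_nonneg _)
  set A : ℕ → ℝ := fun k => ∫ ω, ‖X k ω‖ ^ 2 ∂P with hA_def
  set B : ℝ := γ * ρ ^ 2 + L * γ ^ 2 * (σ ^ 2 + ρ ^ 2) with hB_def
  -- one-step inequality
  have honestep : ∀ k, ∫ ω, R (θ (k+1) ω) ∂P
      ≤ ∫ ω, R (θ k ω) ∂P - γ / 4 * A k + B := by
    intro k
    have hptw : ∀ᵐ ω ∂P, R (θ (k+1) ω) ≤ R (θ k ω) +
        ((L * γ ^ 2 - 3 * γ / 4) * ‖X k ω‖ ^ 2 +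
        ((2 * L * γ ^ 2 - γ) * ⟪X k ω, n k ω⟫ +
        (L * γ ^ 2 * ‖n k ω‖ ^ 2 + (γ * ρ ^ 2 + L * γ ^ 2 * ρ ^ 2)))) := by
      filter_upwards [herr k] with ω he
      have hdesc := sgd_descent_lemma R hRd hL.le hsmooth (θ k ω) ((-γ) • (g k ω + e k ω))
      have hrw : θ k ω + (-γ) • (g k ω + e k ω) = θ (k+1) ω := by
        rw [hstep k ω, neg_smul, ← sub_eq_add_neg]
      rw [hrw] at hdesc
      have h1 : ⟪gradient R (θ k ω), (-γ) • (g k ω + e k ω)⟫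
          = -γ * ⟪X k ω, g k ω + e k ω⟫ := real_inner_smul_right _ _ _
      have h2 : ‖(-γ) • (g k ω + e k ω)‖ ^ 2 = γ ^ 2 * ‖g k ω + e k ω‖ ^ 2 := by
        rw [norm_smul, Real.norm_eq_abs, mul_pow, abs_neg, sq_abs]
      have hXu : ⟪X k ω, g k ω + e k ω⟫
          = ‖X k ω‖ ^ 2 + ⟪X k ω, n k ω⟫ + ⟪X k ω, e k ω⟫ := by
        rw [inner_add_right, hgeq k ω, inner_add_right, real_inner_self_eq_norm_sq]
      have hXe : -⟪X k ω, e k ω⟫ ≤ ‖X k ω‖ ^ 2 / 4 + ρ ^ 2 := by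
        have h' : -⟪X k ω, e k ω⟫ ≤ ‖X k ω‖ * ‖e k ω‖ := by
          have := real_inner_le_norm (X k ω) (-(e k ω))
          simpa [inner_neg_right] using this
        have h2 : ‖X k ω‖ * ‖e k ω‖ ≤ ‖X k ω‖ * ρ :=
          mul_le_mul_of_nonneg_left he (norm_nonneg _)
        nlinarith [sq_nonneg (‖X k ω‖ / 2 - ρ)]
      have hg2 : ‖g k ω‖ ^ 2 = ‖X k ω‖ ^ 2 + 2 * ⟪X k ω, n k ω⟫ + ‖n k ω‖ ^ 2 := by
        rw [hgeq k ω]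
        exact norm_add_sq_real _ _
      have hu2 : ‖g k ω + e k ω‖ ^ 2 ≤ 2 * ‖g k ω‖ ^ 2 + 2 * ρ ^ 2 := by
        have h := norm_add_le (g k ω) (e k ω)
        have h2 : ‖g k ω + e k ω‖ ≤ ‖g k ω‖ + ρ := by linarith
        have h3 : ‖g k ω + e k ω‖ ^ 2 ≤ (‖g k ω‖ + ρ) ^ 2 :=
          pow_le_pow_left₀ (norm_nonneg _) h2 2
        nlinarith [sq_nonneg (‖g k ω‖ - ρ)]
      have hA1 : γ * (-⟪X k ω, e k ω⟫) ≤ γ * (‖X k ω‖ ^ 2 / 4 + ρ ^ 2) :=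
        mul_le_mul_of_nonneg_left hXe hγpos.le
      have hB1 : (L / 2 * γ ^ 2) * ‖g k ω + e k ω‖ ^ 2
          ≤ (L / 2 * γ ^ 2) * (2 * ‖g k ω‖ ^ 2 + 2 * ρ ^ 2) :=
        mul_le_mul_of_nonneg_left hu2 (by positivity)
      rw [h1, h2, hXu] at hdesc
      rw [hg2] at hB1
      linarith [hdesc, hA1, hB1]
    have hconst : Integrable (fun _ : Ω => γ * ρ ^ 2 + L * γ ^ 2 * ρ ^ 2) P := integrable_const _
    have hi4 : Integrable (fun ω => L * γ ^ 2 * ‖n k ω‖ ^ 2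
        + (γ * ρ ^ 2 + L * γ ^ 2 * ρ ^ 2)) P := ((hg2int k).const_mul _).add hconst
    have hi3 : Integrable (fun ω => (2 * L * γ ^ 2 - γ) * ⟪X k ω, n k ω⟫
        + (L * γ ^ 2 * ‖n k ω‖ ^ 2 + (γ * ρ ^ 2 + L * γ ^ 2 * ρ ^ 2))) P :=
      ((hXnint k).const_mul _).add hi4
    have hi2 : Integrable (fun ω => (L * γ ^ 2 - 3 * γ / 4) * ‖X k ω‖ ^ 2
        + ((2 * L * γ ^ 2 - γ) * ⟪X k ω, n k ω⟫
        + (L * γ ^ 2 * ‖n k ω‖ ^ 2 + (γ * ρ ^ 2 + L * γ ^ 2 * ρ ^ 2)))) P :=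
      (((hVint k).const_mul _)).add hi3
    have hi1 : Integrable (fun ω => R (θ k ω) +
        ((L * γ ^ 2 - 3 * γ / 4) * ‖X k ω‖ ^ 2 +
        ((2 * L * γ ^ 2 - γ) * ⟪X k ω, n k ω⟫ +
        (L * γ ^ 2 * ‖n k ω‖ ^ 2 + (γ * ρ ^ 2 + L * γ ^ 2 * ρ ^ 2))))) P :=
      (hRint k).add hi2
    have hmono := integral_mono_ae (hRint (k+1)) hi1 hptw
    have hsplit : ∫ ω, (R (θ k ω) +
        ((L * γ ^ 2 - 3 * γ / 4) * ‖X k ω‖ ^ 2 +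
        ((2 * L * γ ^ 2 - γ) * ⟪X k ω, n k ω⟫ +
        (L * γ ^ 2 * ‖n k ω‖ ^ 2 + (γ * ρ ^ 2 + L * γ ^ 2 * ρ ^ 2))))) ∂P
        = ∫ ω, R (θ k ω) ∂P + ((L * γ ^ 2 - 3 * γ / 4) * A k +
          ((2 * L * γ ^ 2 - γ) * ∫ ω, ⟪X k ω, n k ω⟫ ∂P +
          (L * γ ^ 2 * ∫ ω, ‖n k ω‖ ^ 2 ∂P + (γ * ρ ^ 2 + L * γ ^ 2 * ρ ^ 2)))) := by
      rw [integral_add (hRint k) hi2, integral_add ((hVint k).const_mul _) hi3,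
        integral_add ((hXnint k).const_mul _) hi4,
        integral_add ((hg2int k).const_mul _) hconst,
        integral_const_mul, integral_const_mul, integral_const_mul]
      simp [hA_def]
      exact Or.inl rfl
    rw [hsplit, hzero k] at hmono
    have hterm1 : (L * γ ^ 2 - 3 * γ / 4) * A k ≤ -(γ / 4) * A k := by
      have : L * γ ^ 2 - 3 * γ / 4 ≤ -(γ / 4) := by linarith
      exact mul_le_mul_of_nonneg_right this (hAnonneg k)
    have hterm2 : L * γ ^ 2 * ∫ ω, ‖n k ω‖ ^ 2 ∂P ≤ L * γ ^ 2 * σ ^ 2 :=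
      mul_le_mul_of_nonneg_left (hn2 k) (by positivity)
    have hAk : A k = ∫ ω, ‖X k ω‖ ^ 2 ∂P := rfl
    rw [hB_def]
    linarith [hmono, hterm1, hterm2]
  -- telescoping
  have htel : ∀ M : ℕ, γ / 4 * ∑ k ∈ Finset.range M, A k
      ≤ (∫ ω, R (θ 0 ω) ∂P) - (∫ ω, R (θ M ω) ∂P) + M * B := by
    intro M
    induction M with
    | zero => simp
    | succ M ih =>
        rw [Finset.sum_range_succ, mul_add]
        have h := honestep M
        push_cast
        linarith
  have hR0 : ∫ ω, R (θ 0 ω) ∂P = R θ₀ := by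
    simp only [hθ0]
    simp
  have hRN : (⨅ w, R w) ≤ ∫ ω, R (θ N ω) ∂P := by
    have h1 : ∀ ω, (⨅ w, R w) ≤ R (θ N ω) := fun ω => ciInf_le hbdd (θ N ω)
    calc (⨅ w, R w) = ∫ _, (⨅ w, R w) ∂P := by simp
      _ ≤ ∫ ω, R (θ N ω) ∂P := integral_mono (integrable_const _) (hRint N) h1
  have hmain : γ / 4 * ∑ k ∈ Finset.range N, A k ≤ Δ + N * B := by
    have := htel N
    linarith
  -- final arithmetic
  have hNne : (N:ℝ) ≠ 0 := ne_of_gt hNpos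
  have hγne : γ ≠ 0 := ne_of_gt hγpos
  have hgoal_eq : ∑ k ∈ Finset.range N, ∫ ω, ‖gradient R (θ k ω)‖ ^ 2 ∂P
      = ∑ k ∈ Finset.range N, A k := rfl
  rw [hgoal_eq]
  set S : ℝ := ∑ k ∈ Finset.range N, A k with hS_def
  set W : ℝ := Real.sqrt (L * Δ / N) with hW_def
  have hWpos : 0 < W := Real.sqrt_pos.2 (by positivity)
  have hs2 : s ^ 2 = Δ / (L * N * σ ^ 2) := Real.sq_sqrt hs_arg_pos.le
  have hkey : s * (σ * W) = Δ / N := by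
    have h1 : s * W = Real.sqrt ((Δ / (L * N * σ ^ 2)) * (L * Δ / N)) :=
      (Real.sqrt_mul hs_arg_pos.le _).symm
    have h2 : (Δ / (L * N * σ ^ 2)) * (L * Δ / N) = (Δ / (N * σ)) ^ 2 := by
      field_simp
    have h3 : s * W = Δ / (N * σ) := by
      rw [h1, h2, Real.sqrt_sq (by positivity)]
    calc s * (σ * W) = σ * (s * W) := by ring
      _ = σ * (Δ / (N * σ)) := by rw [h3]
      _ = Δ / N := by field_simp
  have hLsσ : L * s * σ ^ 2 = σ * W := by
    have h1 : (L * s * σ ^ 2) * s = (σ * W) * s := by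
      have h2 : (L * s * σ ^ 2) * s = L * σ ^ 2 * s ^ 2 := by ring
      rw [h2, hs2]
      rw [mul_comm (σ * W) s, hkey]
      field_simp
    exact mul_right_cancel₀ (ne_of_gt hs_pos) h1
  have hb2 : 4 * L * γ * σ ^ 2 ≤ 4 * (σ * W) := by
    have h1 : L * γ * σ ^ 2 ≤ L * s * σ ^ 2 := by
      have := mul_le_mul_of_nonneg_left hγs (by positivity : (0:ℝ) ≤ L * σ ^ 2)
      linarith
    rw [hLsσ] at h1
    linarith
  have hb1 : 4 * L * γ * ρ ^ 2 ≤ 2 * ρ ^ 2 := by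
    have := mul_le_mul_of_nonneg_right hLγ (sq_nonneg ρ)
    linarith
  have hb3 : 4 * Δ / (N * γ) ≤ 8 * L * Δ / N + 4 * (σ * W) := by
    rcases min_cases (1 / (2 * L)) s with ⟨hmin, _⟩ | ⟨hmin, _⟩
    · have hγeq : γ = 1 / (2 * L) := by rw [hγ, hmin]
      have h1 : 4 * Δ / (N * γ) = 8 * L * Δ / N := by
        rw [hγeq]; field_simp; ring
      rw [h1]
      have : 0 ≤ 4 * (σ * W) := by positivity
      linarith
    · have hγeq : γ = s := by rw [hγ, hmin]
      have h1 : 4 * Δ / (N * γ) = 4 * (σ * W) := by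
        rw [hγeq]
        rw [div_eq_iff (by positivity : (N:ℝ) * s ≠ 0)]
        have h2 : (N:ℝ) * (s * (σ * W)) = Δ := by rw [hkey]; field_simp
        linarith
      rw [h1]
      have : 0 ≤ 8 * L * Δ / N := by positivity
      linarith
  have hSbound : (1 / N : ℝ) * S
      ≤ 4 * Δ / (N * γ) + (4 * ρ ^ 2 + (4 * L * γ * σ ^ 2 + 4 * L * γ * ρ ^ 2)) := by
    have h1 : S ≤ 4 / γ * (Δ + N * B) := by
      have h2 := mul_le_mul_of_nonneg_left hmain
        (le_of_lt (by positivity : (0:ℝ) < 4 / γ))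
      calc S = 4 / γ * (γ / 4 * S) := by field_simp
        _ ≤ 4 / γ * (Δ + N * B) := h2
    have h3 : (1 / N : ℝ) * (4 / γ * (Δ + N * B))
        = 4 * Δ / (N * γ) + (4 * ρ ^ 2 + (4 * L * γ * σ ^ 2 + 4 * L * γ * ρ ^ 2)) := by
      rw [hB_def]
      field_simp
    calc (1 / N : ℝ) * S ≤ (1 / N : ℝ) * (4 / γ * (Δ + N * B)) := by
          exact mul_le_mul_of_nonneg_left h1 (by positivity)
      _ = _ := h3
  have hρ2 : 0 ≤ ρ ^ 2 := sq_nonneg ρ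
  calc (1 / N : ℝ) * S
      ≤ 4 * Δ / (N * γ) + (4 * ρ ^ 2 + (4 * L * γ * σ ^ 2 + 4 * L * γ * ρ ^ 2)) := hSbound
    _ ≤ (8 * L * Δ / N + 4 * (σ * W)) + (4 * ρ ^ 2 + (4 * (σ * W) + 2 * ρ ^ 2)) := by
        linarith
    _ ≤ 8 * L * Δ / N + 8 * σ * W + 8 * ρ ^ 2 := by linarith
    _ = 8 * L * Δ / N + 8 * σ * Real.sqrt (L * Δ / N) + 8 * ρ ^ 2 := by rw [hW_def]
end
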